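/- arXiv:1207.2990 — 4 statements merged into one kernel-verified Lean document; each statement's English description precedes it below -/
import Mathlib

section
/- Let ω be a majorant, λ ≥ 0, and let f : 𝔹ⁿ → ℂ be a solution to the Yukawa equation Δf = λf satisfying |∇̃f(z)| ≤ C·ω(1/d(z)) for all z ∈ 𝔹ⁿ, where C > 0. Then for every z ∈ 𝔹ⁿ and every r ∈ (0, d(z)], (1/|𝔹ⁿ(z,r)|) ∫_{𝔹ⁿ(z,r)} |f(ζ) − f(z)| dV(ζ) ≤ C√(2n)·(Σ_{j=1}^{2n} 1/j)·r·ω(1/r). -/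
open MeasureTheory Metric Complex
open scoped ENNReal NNReal

noncomputable section

/-- `ℂⁿ` with the Euclidean norm. -/
abbrev Cn (n : ℕ) := EuclideanSpace ℂ (Fin n)

instance (n : ℕ) : MeasurableSpace (Cn n) := MeasurableSpace.comap WithLp.ofLp MeasurableSpace.pi
instance (n : ℕ) : BorelSpace (Cn n) := PiLp.borelSpace 2

/-- The Wirtinger derivative `f_{z_k}`. -/
def wderiv {n : ℕ} (f : Cn n → ℂ) (z : Cn n) (k : Fin n) : ℂ :=
  (fderiv ℝ f z (EuclideanSpace.single k (1 : ℂ))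
    - Complex.I * fderiv ℝ f z (EuclideanSpace.single k Complex.I)) / 2

/-- The Wirtinger derivative `f_{z̄_k}`. -/
def wderivBar {n : ℕ} (f : Cn n → ℂ) (z : Cn n) (k : Fin n) : ℂ :=
  (fderiv ℝ f z (EuclideanSpace.single k (1 : ℂ))
    + Complex.I * fderiv ℝ f z (EuclideanSpace.single k Complex.I)) / 2

/-- `|∇̃ f|`, the Hilbert–Schmidt norm of the Wirtinger gradient. -/
def gradNorm {n : ℕ} (f : Cn n → ℂ) (z : Cn n) : ℝ :=
  Real.sqrt (∑ k : Fin n, (‖wderiv f z k‖ ^ 2 + ‖wderivBar f z k‖ ^ 2))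

/-- The usual (real) Laplacian `Δ = Σₖ (∂²/∂xₖ² + ∂²/∂yₖ²)`. -/
def lap {n : ℕ} {F : Type*} [NormedAddCommGroup F] [NormedSpace ℝ F] (f : Cn n → F) (z : Cn n) : F :=
  ∑ k : Fin n,
    (fderiv ℝ (fun w => fderiv ℝ f w (EuclideanSpace.single k (1 : ℂ))) z
        (EuclideanSpace.single k (1 : ℂ))
      + fderiv ℝ (fun w => fderiv ℝ f w (EuclideanSpace.single k Complex.I)) z
        (EuclideanSpace.single k Complex.I))

/-- `f` is a (twice continuously differentiable) solution of the Yukawa equation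
`Δ f = λ f` on the unit ball. -/
def IsYukawa {n : ℕ} (lam : ℝ) (f : Cn n → ℂ) : Prop :=
  ContDiffOn ℝ 2 f (ball (0 : Cn n) 1) ∧
    ∀ z ∈ ball (0 : Cn n) 1, lap f z = (lam : ℂ) * f z

/-- `f` is harmonic on the unit ball. -/
def IsHarmonicBall {n : ℕ} (f : Cn n → ℂ) : Prop :=
  ContDiffOn ℝ 2 f (ball (0 : Cn n) 1) ∧ ∀ z ∈ ball (0 : Cn n) 1, lap f z = 0

/-- A majorant: a continuous increasing function `ω : [0,∞) → [0,∞)` with `ω 0 = 0`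
such that `ω t / t` is non-increasing for `t > 0`. -/
def Majorant (ω : ℝ → ℝ) : Prop :=
  ContinuousOn ω (Set.Ici 0) ∧ MonotoneOn ω (Set.Ici 0) ∧ ω 0 = 0 ∧
    AntitoneOn (fun t => ω t / t) (Set.Ioi 0)

/-- The normalized surface measure `σ` on the unit sphere `∂𝔹ⁿ` of `ℂⁿ`. -/
def sigmaN (n : ℕ) : Measure (sphere (0 : Cn n) 1) :=
  ((volume : Measure (Cn n)).toSphere Set.univ)⁻¹ • (volume : Measure (Cn n)).toSphere

/-- `M_p^p(r, g) = ∫_{∂𝔹ⁿ} g(rζ)^p dσ(ζ)` for a (nonnegative) function `g`. -/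
def Mpp {n : ℕ} (p r : ℝ) (g : Cn n → ℝ) : ℝ :=
  ∫ ζ : sphere (0 : Cn n) 1, g (r • (ζ : Cn n)) ^ p ∂(sigmaN n)

/-- The integral mean `M_p(r, g)`. -/
def Mp {n : ℕ} (p r : ℝ) (g : Cn n → ℝ) : ℝ := (Mpp p r g) ^ (1/p : ℝ)

/-- The Dirichlet-type energy integral
`D_f(ν,γ,t) = ∫_{𝔹ⁿ} (1−|z|)^ν |f(z)|^γ |∇̃f(z)|^t dV_N(z)` (with value in `[0,∞]`),
where `dV_N` is the normalized Lebesgue volume measure on the unit ball. -/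
def Dir {n : ℕ} (f : Cn n → ℂ) (ν γ t : ℝ) : ℝ≥0∞ :=
  (volume (ball (0 : Cn n) 1))⁻¹ *
    ∫⁻ z in ball (0 : Cn n) 1,
      ENNReal.ofReal ((1 - ‖z‖) ^ ν * ‖f z‖ ^ γ * gradNorm f z ^ t)

/-- The pointwise expression `Ψ_p = Δ(|f|^p)` for a solution of the Yukawa equation. -/
def Psi {n : ℕ} (p lam : ℝ) (f : Cn n → ℂ) (z : Cn n) : ℝ :=
  p * (p - 2) * ‖f z‖ ^ (p - 4) *
      ∑ k : Fin n,
        ‖f z * (starRingEnd ℂ) (wderiv f z k)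
          + (starRingEnd ℂ) (f z) * wderivBar f z k‖ ^ 2
    + 2 * p * ‖f z‖ ^ (p - 2) * gradNorm f z ^ 2
    + p * lam * ‖f z‖ ^ p

/-- A continuous function `u` is subharmonic on the unit ball (sub-mean-value property
with respect to the normalized surface measure `σ`). -/
def SubharmonicOnUnitBall {n : ℕ} (u : Cn n → ℝ) : Prop :=
  ContinuousOn u (ball (0 : Cn n) 1) ∧
    ∀ z₀ ∈ ball (0 : Cn n) 1, ∃ ε, 0 < ε ∧ ε < 1 - ‖z₀‖ ∧
      ∀ r : ℝ, 0 ≤ r → r < ε →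
        u z₀ ≤ ∫ ζ : sphere (0 : Cn n) 1, u (z₀ + r • (ζ : Cn n)) ∂(sigmaN n)


section StmtTwoAux
open Filter
open scoped Topology

private lemma abs_half_sum (a b : ℂ) :
    ‖(a - Complex.I*b)/2‖ ^ 2 + ‖(a + Complex.I*b)/2‖ ^ 2
      = (‖a‖ ^ 2 + ‖b‖ ^ 2) / 2 := by
  rw [norm_div, norm_div, Complex.norm_two, div_pow, div_pow]
  have h : ‖a - Complex.I*b‖ ^ 2 + ‖a + Complex.I*b‖ ^ 2
      = 2 * (‖a‖ ^ 2 + ‖b‖ ^ 2) := by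
    simp only [Complex.sq_norm, Complex.normSq_apply, Complex.sub_re, Complex.sub_im,
      Complex.add_re, Complex.add_im, Complex.mul_re, Complex.mul_im, Complex.I_re, Complex.I_im]
    ring
  linarith

private lemma v_decomp {n : ℕ} (v : Cn n) :
    v = ∑ k : Fin n, ((v k).re • EuclideanSpace.single k (1:ℂ)
        + (v k).im • EuclideanSpace.single k Complex.I) := by
  ext j
  rw [show (∑ k : Fin n, ((v k).re • EuclideanSpace.single k (1:ℂ)
        + (v k).im • EuclideanSpace.single k Complex.I)) j
      = ∑ k : Fin n, ((v k).re • EuclideanSpace.single k (1:ℂ)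
        + (v k).im • EuclideanSpace.single k Complex.I) j from by rw [WithLp.ofLp_sum, Finset.sum_apply]]
  have : ∀ k, ((v k).re • EuclideanSpace.single k (1:ℂ)
        + (v k).im • EuclideanSpace.single k Complex.I) j
      = if j = k then v k else 0 := by
    intro k
    have h3 : ((v k).re • EuclideanSpace.single k (1:ℂ)
        + (v k).im • EuclideanSpace.single k Complex.I) j
      = (v k).re • (EuclideanSpace.single k (1:ℂ) j)
        + (v k).im • (EuclideanSpace.single k Complex.I j) := rfl
    rw [h3, EuclideanSpace.single_apply, EuclideanSpace.single_apply]
    by_cases h : j = k <;> simp [h, Complex.ext_iff]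
  rw [Finset.sum_congr rfl (fun k _ => this k), Finset.sum_ite_eq Finset.univ j v]
  simp

private lemma lemA {n : ℕ} (f : Cn n → ℂ) (w v : Cn n) :
    ‖fderiv ℝ f w v‖ ≤ Real.sqrt 2 * gradNorm f w * ‖v‖ := by
  set D := fderiv ℝ f w with hD
  set a : Fin n → ℂ := fun k => D (EuclideanSpace.single k (1:ℂ)) with ha
  set b : Fin n → ℂ := fun k => D (EuclideanSpace.single k Complex.I) with hb
  have hDv : D v = ∑ k : Fin n, ((v k).re • a k + (v k).im • b k) := by
    conv_lhs => rw [v_decomp v]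
    rw [map_sum]
    exact Finset.sum_congr rfl fun k _ => by rw [map_add, D.map_smul, D.map_smul]
  set S : ℝ := ∑ k : Fin n, (‖a k‖^2 + ‖b k‖^2) with hS
  have hSnn : 0 ≤ S := Finset.sum_nonneg fun k _ => by positivity
  have step1 : ‖D v‖ ≤ ∑ k : Fin n, ‖v k‖ * Real.sqrt (‖a k‖^2 + ‖b k‖^2) := by
    rw [hDv]
    refine (norm_sum_le _ _).trans (Finset.sum_le_sum fun k _ => ?_)
    have h1 : ‖(v k).re • a k + (v k).im • b k‖ ≤ |(v k).re| * ‖a k‖ + |(v k).im| * ‖b k‖ := by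
      refine (norm_add_le _ _).trans ?_
      rw [norm_smul, norm_smul, Real.norm_eq_abs, Real.norm_eq_abs]
    refine h1.trans ?_
    have h2 : (|(v k).re| * ‖a k‖ + |(v k).im| * ‖b k‖)^2
        ≤ ((v k).re^2 + (v k).im^2) * (‖a k‖^2 + ‖b k‖^2) := by
      nlinarith [sq_nonneg (|(v k).re| * ‖b k‖ - |(v k).im| * ‖a k‖), _root_.sq_abs (v k).re,
        _root_.sq_abs (v k).im, abs_nonneg (v k).re, abs_nonneg (v k).im, norm_nonneg (a k),
        norm_nonneg (b k), mul_nonneg (abs_nonneg (v k).re) (norm_nonneg (a k)),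
        mul_nonneg (abs_nonneg (v k).im) (norm_nonneg (b k))]
    have h3 : |(v k).re| * ‖a k‖ + |(v k).im| * ‖b k‖
        ≤ Real.sqrt (((v k).re^2 + (v k).im^2) * (‖a k‖^2 + ‖b k‖^2)) := by
      rw [show |(v k).re| * ‖a k‖ + |(v k).im| * ‖b k‖
          = Real.sqrt ((|(v k).re| * ‖a k‖ + |(v k).im| * ‖b k‖)^2) from
          (Real.sqrt_sq (by positivity)).symm]
      exact Real.sqrt_le_sqrt h2
    refine h3.trans_eq ?_
    rw [Real.sqrt_mul (by positivity)]
    congr 1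
    rw [Complex.norm_def, Complex.normSq_apply]
    ring_nf
  have step2 : ∑ k : Fin n, ‖v k‖ * Real.sqrt (‖a k‖^2 + ‖b k‖^2)
      ≤ Real.sqrt (∑ k : Fin n, ‖v k‖^2) * Real.sqrt S := by
    have h := Real.sum_mul_le_sqrt_mul_sqrt Finset.univ (fun k => ‖v k‖)
      (fun k => Real.sqrt (‖a k‖^2 + ‖b k‖^2))
    have e : ∑ k : Fin n, Real.sqrt (‖a k‖^2 + ‖b k‖^2) ^ 2 = S :=
      Finset.sum_congr rfl fun k _ => Real.sq_sqrt (by positivity)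
    rw [← e]
    exact h
  have hnv : Real.sqrt (∑ k : Fin n, ‖v k‖^2) = ‖v‖ := (EuclideanSpace.norm_eq v).symm
  have hgrad : Real.sqrt 2 * gradNorm f w = Real.sqrt S := by
    rw [gradNorm]
    have : ∑ k : Fin n, (‖wderiv f w k‖ ^ 2 + ‖wderivBar f w k‖ ^ 2)
        = S / 2 := by
      rw [hS, Finset.sum_div]
      exact Finset.sum_congr rfl fun k _ => abs_half_sum (a k) (b k)
    rw [this, ← Real.sqrt_mul (by norm_num : (0:ℝ) ≤ 2) (S/2),
      show (2:ℝ) * (S/2) = S by ring]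
  calc ‖D v‖ ≤ ∑ k : Fin n, ‖v k‖ * Real.sqrt (‖a k‖^2 + ‖b k‖^2) := step1
    _ ≤ Real.sqrt (∑ k : Fin n, ‖v k‖^2) * Real.sqrt S := step2
    _ = ‖v‖ * (Real.sqrt 2 * gradNorm f w) := by rw [hnv, hgrad]
    _ = Real.sqrt 2 * gradNorm f w * ‖v‖ := by ring

private lemma lemNN {ω : ℝ → ℝ} (hω : Majorant ω) {x : ℝ} (hx : 0 ≤ x) : 0 ≤ ω x := by
  have := hω.2.1 (Set.self_mem_Ici) hx hx
  rw [hω.2.2.1] at this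
  exact this

private lemma lemQ {ω : ℝ → ℝ} (hω : Majorant ω) {x y : ℝ} (hx : 0 < x) (hxy : x ≤ y) :
    ω y ≤ (y / x) * ω x := by
  have hy : 0 < y := hx.trans_le hxy
  have h := hω.2.2.2 (Set.mem_Ioi.2 hx) (Set.mem_Ioi.2 hy) hxy
  have h2 : ω y / y ≤ ω x / x := h
  calc ω y = y * (ω y / y) := by field_simp
    _ ≤ y * (ω x / x) := by
        exact mul_le_mul_of_nonneg_left h2 hy.le
    _ = (y / x) * ω x := by ring

private lemma lemB {n : ℕ} (ω : ℝ → ℝ) (hω : Majorant ω) (f : Cn n → ℂ) (C : ℝ) (hC : 0 < C)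
    (hd : DifferentiableOn ℝ f (ball (0:Cn n) 1))
    (hcd : ContinuousOn (fderiv ℝ f) (ball (0:Cn n) 1))
    (hg : ∀ z ∈ ball (0:Cn n) 1, gradNorm f z ≤ C * ω (1/(1-‖z‖)))
    (z : Cn n) (r : ℝ) (hr : 0 < r) (hr2 : r ≤ 1 - ‖z‖)
    (ζ : Cn n) (hζ : ζ ∈ ball z r) :
    ‖f ζ - f z‖ ≤
      (Real.sqrt 2 * C * ω (1/r)) * (r * (Real.log r - Real.log (r - ‖ζ - z‖))) := by
  set s := ‖ζ - z‖ with hsdef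
  have hs : s < r := by rwa [mem_ball, dist_eq_norm] at hζ
  have hs0 : 0 ≤ s := norm_nonneg _
  set γ : ℝ → Cn n := fun t => z + t • (ζ - z) with hγ
  have hnorm : ∀ t ∈ Set.Icc (0:ℝ) 1, ‖γ t‖ ≤ ‖z‖ + t * s := by
    intro t ht
    calc ‖z + t • (ζ - z)‖ ≤ ‖z‖ + ‖t • (ζ - z)‖ := norm_add_le _ _
      _ = ‖z‖ + |t| * s := by rw [norm_smul, Real.norm_eq_abs]
      _ = ‖z‖ + t * s := by rw [_root_.abs_of_nonneg ht.1]
  have hpos : ∀ t ∈ Set.Icc (0:ℝ) 1, 0 < r - t * s := by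
    intro t ht
    have h1 : t * s ≤ s := by
      nlinarith [ht.1, ht.2]
    linarith
  have hmem : ∀ t ∈ Set.Icc (0:ℝ) 1, γ t ∈ ball (0:Cn n) 1 := by
    intro t ht
    rw [mem_ball_zero_iff]
    have h1 : t * s ≤ s := by nlinarith [ht.1, ht.2]
    have := hnorm t ht
    linarith
  have hup : ∀ t ∈ Set.Icc (0:ℝ) 1, r - t * s ≤ 1 - ‖γ t‖ := by
    intro t ht
    have := hnorm t ht
    linarith
  have huIcc : Set.uIcc (0:ℝ) 1 = Set.Icc 0 1 := Set.uIcc_of_le zero_le_one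
  have hD : ∀ t ∈ Set.uIcc (0:ℝ) 1,
      HasDerivAt (fun u => f (γ u)) (fderiv ℝ f (γ t) (ζ - z)) t := by
    intro t ht
    rw [huIcc] at ht
    have h2 : HasDerivAt γ (ζ - z) t := by
      have h0 : HasDerivAt (fun u : ℝ => u • (ζ - z)) ((1:ℝ) • (ζ - z)) t :=
        (hasDerivAt_id t).smul_const (ζ - z)
      exact (by simpa using h0 : HasDerivAt (fun u : ℝ => u • (ζ - z)) (ζ - z) t).const_add z
    have h1 : HasFDerivAt f (fderiv ℝ f (γ t)) (γ t) :=
      (hd.differentiableAt (isOpen_ball.mem_nhds (hmem t ht))).hasFDerivAt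
    exact h1.comp_hasDerivAt t h2
  have hγc : Continuous γ := continuous_const.add (continuous_id.smul continuous_const)
  have contD : ContinuousOn (fun t => fderiv ℝ f (γ t) (ζ - z)) (Set.Icc (0:ℝ) 1) :=
    ContinuousOn.clm_apply (hcd.comp (hγc.continuousOn) hmem) continuousOn_const
  have hFTC : ∫ t in (0:ℝ)..1, fderiv ℝ f (γ t) (ζ - z) = f ζ - f z := by
    have := intervalIntegral.integral_eq_sub_of_hasDerivAt hD
      ((contD.mono (by rw [huIcc])).intervalIntegrable)
    rw [this]
    congr 1 <;> simp [hγ]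
  set K : ℝ := Real.sqrt 2 * C * ω (1/r) with hK
  set g : ℝ → ℝ := fun t => K * (r * s / (r - t * s)) with hgdef
  have contg : ContinuousOn g (Set.Icc (0:ℝ) 1) := by
    apply continuousOn_const.mul
    exact ContinuousOn.div continuousOn_const
      (continuousOn_const.sub (continuousOn_id.mul continuousOn_const))
      (fun t ht => (hpos t ht).ne')
  have hbound : ∀ t ∈ Set.Icc (0:ℝ) 1, ‖fderiv ℝ f (γ t) (ζ - z)‖ ≤ g t := by
    intro t ht
    have hposr := hpos t ht
    have e1 : ‖fderiv ℝ f (γ t) (ζ - z)‖ ≤ Real.sqrt 2 * gradNorm f (γ t) * s :=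
      lemA f (γ t) (ζ - z)
    have hball1 : 0 < 1 - ‖γ t‖ := by
      have := mem_ball_zero_iff.1 (hmem t ht); linarith
    have e4 : ω (1/(1-‖γ t‖)) ≤ ω (1/(r - t*s)) := by
      apply hω.2.1 (Set.mem_Ici.2 (by positivity)) (Set.mem_Ici.2 (by positivity))
      exact one_div_le_one_div_of_le hposr (hup t ht)
    have e5 : ω (1/(r - t*s)) ≤ (r/(r - t*s)) * ω (1/r) := by
      have hts : 0 ≤ t * s := mul_nonneg ht.1 hs0
      have h := lemQ hω (show 0 < 1/r by positivity)
        (one_div_le_one_div_of_le hposr (by linarith : r - t*s ≤ r))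
      have heq : (1/(r - t*s))/(1/r) = r/(r - t*s) := by
        field_simp
      rwa [heq] at h
    have e2 : gradNorm f (γ t) ≤ C * ((r/(r - t*s)) * ω (1/r)) :=
      (hg _ (hmem t ht)).trans (mul_le_mul_of_nonneg_left (e4.trans e5) hC.le)
    calc ‖fderiv ℝ f (γ t) (ζ - z)‖ ≤ Real.sqrt 2 * gradNorm f (γ t) * s := e1
      _ ≤ Real.sqrt 2 * (C * ((r/(r - t*s)) * ω (1/r))) * s :=
          mul_le_mul_of_nonneg_right
            (mul_le_mul_of_nonneg_left e2 (Real.sqrt_nonneg 2)) hs0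
      _ = g t := by rw [hgdef, hK]; ring
  have hIntD : ∫ t in (0:ℝ)..1, r * s / (r - t * s) = r * (Real.log r - Real.log (r - s)) := by
    have hF : ∀ t ∈ Set.uIcc (0:ℝ) 1,
        HasDerivAt (fun u => -(r * Real.log (r - u * s))) (r * s / (r - t * s)) t := by
      intro t ht
      rw [huIcc] at ht
      have hposr := hpos t ht
      have hin : HasDerivAt (fun u : ℝ => r - u * s) (-s) t := by
        simpa using (hasDerivAt_id t).mul_const s |>.const_sub r
      have hlog : HasDerivAt (fun u : ℝ => Real.log (r - u * s)) ((r - t*s)⁻¹ * (-s)) t :=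
        by have := (Real.hasDerivAt_log hposr.ne').comp t hin; exact this
      have := (hlog.const_mul r).fun_neg
      exact this.congr_deriv (by ring)
    have hcont : ContinuousOn (fun t => r * s / (r - t * s)) (Set.Icc (0:ℝ) 1) :=
      ContinuousOn.div continuousOn_const
        (continuousOn_const.sub (continuousOn_id.mul continuousOn_const))
        (fun t ht => (hpos t ht).ne')
    rw [intervalIntegral.integral_eq_sub_of_hasDerivAt hF
      ((hcont.mono (by rw [huIcc])).intervalIntegrable)]
    have h1 : (1:ℝ) * s = s := one_mul s
    simp only [h1, zero_mul, sub_zero]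
    ring
  calc ‖f ζ - f z‖ = ‖∫ t in (0:ℝ)..1, fderiv ℝ f (γ t) (ζ - z)‖ := by
        rw [hFTC]
    _ ≤ ∫ t in (0:ℝ)..1, ‖fderiv ℝ f (γ t) (ζ - z)‖ :=
        intervalIntegral.norm_integral_le_integral_norm zero_le_one
    _ ≤ ∫ t in (0:ℝ)..1, g t := by
        apply intervalIntegral.integral_mono_on zero_le_one
        · exact (contD.norm.mono (by rw [← huIcc])).intervalIntegrable |>.mono_set (by rw [huIcc])
        · exact (contg.mono (by rw [← huIcc] : Set.uIcc (0:ℝ) 1 ⊆ _)).intervalIntegrable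
        · exact hbound
    _ = K * (r * (Real.log r - Real.log (r - s))) := by
        rw [hgdef]
        rw [intervalIntegral.integral_const_mul, hIntD]

private lemma oneDimInt (m : ℕ) :
    IntegrableOn (fun t => 1 - (1 - Real.exp (-t))^m) (Set.Ioi (0:ℝ)) ∧
    ∫ t in Set.Ioi (0:ℝ), (1 - (1 - Real.exp (-t))^m)
      = ∑ j ∈ Finset.range m, (1:ℝ)/(j+1) := by
  have hv : ∀ t : ℝ, HasDerivAt (fun u => 1 - Real.exp (-u)) (Real.exp (-t)) t := by
    intro t
    have h := (Real.hasDerivAt_exp (-t)).comp t (hasDerivAt_neg t)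
    simpa using h.const_sub 1
  set G : ℝ → ℝ :=
    fun t => -∑ j ∈ Finset.range m, (1 - (1 - Real.exp (-t))^(j+1))/((j:ℝ)+1) with hG
  have hGd : ∀ t : ℝ, HasDerivAt G (1 - (1 - Real.exp (-t))^m) t := by
    intro t
    have h1 : HasDerivAt (fun u => ∑ j ∈ Finset.range m,
        (1 - (1 - Real.exp (-u))^(j+1))/((j:ℝ)+1))
        (∑ j ∈ Finset.range m,
          (-((↑(j+1):ℝ) * (1 - Real.exp (-t))^(j+1-1) * Real.exp (-t)))/((j:ℝ)+1)) t :=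
      HasDerivAt.fun_sum fun j _ => (((hv t).pow (j+1)).const_sub 1).div_const _
    have h2 := h1.neg
    have he : -∑ j ∈ Finset.range m,
        (-((↑(j+1):ℝ) * (1 - Real.exp (-t))^(j+1-1) * Real.exp (-t)))/((j:ℝ)+1)
        = 1 - (1 - Real.exp (-t))^m := by
      have hstep : ∀ j ∈ Finset.range m,
          (-((↑(j+1):ℝ) * (1 - Real.exp (-t))^(j+1-1) * Real.exp (-t)))/((j:ℝ)+1)
          = -((1 - Real.exp (-t))^j * Real.exp (-t)) := by
        intro j _
        have hj : ((j:ℝ)+1) ≠ 0 := by positivity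
        push_cast
        field_simp
      rw [Finset.sum_congr rfl hstep]
      rw [Finset.sum_neg_distrib, neg_neg, ← Finset.sum_mul]
      have hg := geom_sum_mul (1 - Real.exp (-t)) m
      linear_combination -hg
    exact he ▸ h2
  have hint : IntegrableOn (fun t => 1 - (1 - Real.exp (-t))^m) (Set.Ioi (0:ℝ)) := by
    have hmeas : AEStronglyMeasurable (fun t : ℝ => 1 - (1 - Real.exp (-t))^m)
        (volume.restrict (Set.Ioi 0)) :=
      ((continuous_const.sub ((continuous_const.sub
        (Real.continuous_exp.comp continuous_neg)).pow m))).aestronglyMeasurable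
    have hdom : IntegrableOn (fun t : ℝ => (m:ℝ) * Real.exp (-t)) (Set.Ioi (0:ℝ)) := by
      have := (exp_neg_integrableOn_Ioi 0 (by norm_num : (0:ℝ) < 1)).const_mul (m:ℝ)
      simp at this; exact this
    refine Integrable.mono' hdom hmeas ?_
    filter_upwards [ae_restrict_mem measurableSet_Ioi] with t ht
    have hep : 0 < Real.exp (-t) := Real.exp_pos _
    have hel : Real.exp (-t) ≤ 1 := by
      rw [Real.exp_le_one_iff]
      simp only [Set.mem_Ioi] at ht
      linarith
    have hb := one_add_mul_le_pow (a := -Real.exp (-t)) (by linarith : (-2:ℝ) ≤ _) m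
    have hp1 : (1 - Real.exp (-t))^m ≤ 1 := by
      apply pow_le_one₀ <;> linarith
    rw [Real.norm_eq_abs, _root_.abs_of_nonneg (by linarith)]
    have : 1 + (m:ℝ) * -Real.exp (-t) ≤ (1 - Real.exp (-t))^m := by
      rw [sub_eq_add_neg]; exact hb
    nlinarith
  refine ⟨hint, ?_⟩
  have htend : Tendsto G atTop (𝓝 0) := by
    have h0 : Tendsto (fun t => Real.exp (-t)) atTop (𝓝 0) :=
      Real.tendsto_exp_neg_atTop_nhds_zero
    have hsum : Tendsto (fun t => ∑ j ∈ Finset.range m,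
        (1 - (1 - Real.exp (-t))^(j+1))/((j:ℝ)+1)) atTop (𝓝 0) := by
      have : Tendsto (fun t => ∑ j ∈ Finset.range m,
          (1 - (1 - Real.exp (-t))^(j+1))/((j:ℝ)+1)) atTop
          (𝓝 (∑ j ∈ Finset.range m, (0:ℝ))) := by
        apply tendsto_finset_sum
        intro j _
        have hv1 : Tendsto (fun t => 1 - Real.exp (-t)) atTop (𝓝 1) := by
          simpa using tendsto_const_nhds.sub h0
        have hp : Tendsto (fun t => (1 - Real.exp (-t))^(j+1)) atTop (𝓝 1) := by
          simpa using hv1.pow (j+1)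
        have : Tendsto (fun t => 1 - (1 - Real.exp (-t))^(j+1)) atTop (𝓝 0) := by
          simpa using hp.const_sub 1
        simpa using this.div_const ((j:ℝ)+1)
      simpa using this
    simpa using hsum.neg
  have := integral_Ioi_of_hasDerivAt_of_tendsto' (f := G)
    (fun x _ => hGd x) hint htend
  rw [this, hG]
  simp [Real.exp_zero, zero_pow (Nat.succ_ne_zero _)]

private lemma finrank_Cn (n : ℕ) : Module.finrank ℝ (Cn n) = 2 * n := by
  rw [← Module.finrank_mul_finrank ℝ ℂ (EuclideanSpace ℂ (Fin n)), finrank_euclideanSpace,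
    Complex.finrank_real_complex, Fintype.card_fin]

private lemma lemC {n : ℕ} (hn : 0 < n) (z : Cn n) (r : ℝ) (hr : 0 < r) :
    ∫⁻ ζ in ball z r, ENNReal.ofReal (Real.log r - Real.log (r - ‖ζ - z‖))
      = volume (ball z r) * ENNReal.ofReal (∑ j ∈ Finset.range (2*n), (1:ℝ)/(j+1)) := by
  haveI : Nontrivial (Cn n) :=
    Module.nontrivial_of_finrank_pos (R := ℝ) (by rw [finrank_Cn]; omega)
  set m := 2 * n with hm
  set c := volume (ball (0 : Cn n) 1) with hc
  set F : Cn n → ℝ := fun ζ => Real.log r - Real.log (r - ‖ζ - z‖) with hF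
  have hFmeas : Measurable F :=
    measurable_const.sub (Real.measurable_log.comp
      (measurable_const.sub (measurable_id.sub_const z).norm))
  have hF0 : ∀ ζ ∈ ball z r, 0 ≤ F ζ := by
    intro ζ hζ
    rw [mem_ball, dist_eq_norm] at hζ
    have h1 : 0 < r - ‖ζ - z‖ := by linarith
    have := (Real.log_le_log_iff h1 hr).2 (by linarith [norm_nonneg (ζ - z)])
    simp only [hF]
    linarith
  have hnn : 0 ≤ᵐ[volume.restrict (ball z r)] F :=
    (ae_restrict_iff' measurableSet_ball).2 (Eventually.of_forall hF0)
  have key := lintegral_eq_lintegral_meas_lt (volume.restrict (ball z r)) hnn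
    hFmeas.aemeasurable
  have hvol : volume (ball z r) = ENNReal.ofReal (r^m) * c := by
    rw [Measure.addHaar_ball volume z hr.le, finrank_Cn]
  have hmeasset : ∀ t ∈ Set.Ioi (0:ℝ),
      (volume.restrict (ball z r)) {a | t < F a}
        = ENNReal.ofReal (1 - (1 - Real.exp (-t))^m) * (ENNReal.ofReal (r^m) * c) := by
    intro t ht
    rw [Set.mem_Ioi] at ht
    have hexp1 : Real.exp (-t) < 1 := by
      rw [Real.exp_lt_one_iff]; linarith
    have hexp0 : 0 < Real.exp (-t) := Real.exp_pos _
    set ρ := r * (1 - Real.exp (-t)) with hρ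
    have hρ0 : 0 ≤ ρ := by
      apply mul_nonneg hr.le; linarith
    have hρr : ρ < r := by
      rw [hρ]; nlinarith
    have hseteq : {a | t < F a} ∩ ball z r = ball z r \ closedBall z ρ := by
      ext a
      simp only [Set.mem_inter_iff, Set.mem_setOf_eq, Set.mem_diff, mem_ball, mem_closedBall,
        dist_eq_norm]
      constructor
      · rintro ⟨h1, h2⟩
        refine ⟨h2, ?_⟩
        intro hcon
        have hd0 : 0 ≤ ‖a - z‖ := norm_nonneg _
        have hrd : 0 < r - ‖a - z‖ := by linarith
        have hlog : Real.log r - t = Real.log (r * Real.exp (-t)) := by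
          rw [Real.log_mul hr.ne' hexp0.ne', Real.log_exp]; ring
        have h3 : Real.log (r - ‖a - z‖) < Real.log (r * Real.exp (-t)) := by
          rw [← hlog]
          simp only [hF] at h1
          linarith
        have h4 : r - ‖a - z‖ < r * Real.exp (-t) :=
          (Real.log_lt_log_iff hrd (by positivity)).1 h3
        rw [hρ] at hcon
        nlinarith
      · rintro ⟨h2, h1⟩
        push_neg at h1
        refine ⟨?_, h2⟩
        have hd0 : 0 ≤ ‖a - z‖ := norm_nonneg _
        have hrd : 0 < r - ‖a - z‖ := by linarith
        have h4 : r - ‖a - z‖ < r * Real.exp (-t) := by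
          rw [hρ] at h1; nlinarith
        have h3 : Real.log (r - ‖a - z‖) < Real.log (r * Real.exp (-t)) :=
          (Real.log_lt_log_iff hrd (by positivity)).2 h4
        have hlog : Real.log r - t = Real.log (r * Real.exp (-t)) := by
          rw [Real.log_mul hr.ne' hexp0.ne', Real.log_exp]; ring
        simp only [hF]
        linarith
    rw [Measure.restrict_apply' measurableSet_ball, hseteq,
      measure_diff (closedBall_subset_ball hρr) measurableSet_closedBall.nullMeasurableSet
        measure_closedBall_lt_top.ne,
      hvol, Measure.addHaar_closedBall volume z hρ0, finrank_Cn]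
    rw [← hm, ← ENNReal.sub_mul (fun _ _ => (by rw [hc]; exact measure_ball_lt_top.ne)),
      ← ENNReal.ofReal_sub _ (pow_nonneg hρ0 m)]
    have : r^m - ρ^m = (1 - (1 - Real.exp (-t))^m) * r^m := by
      rw [hρ, mul_pow]; ring
    rw [this, ENNReal.ofReal_mul (by nlinarith [pow_le_one₀ (by linarith : (0:ℝ) ≤ 1 - Real.exp (-t)) (by linarith : 1 - Real.exp (-t) ≤ 1) (n := m)]),
      mul_assoc]
  rw [key, setLIntegral_congr_fun measurableSet_Ioi hmeasset]
  have hgmeas : Measurable fun t : ℝ => ENNReal.ofReal (1 - (1 - Real.exp (-t))^m) :=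
    ENNReal.measurable_ofReal.comp
      (measurable_const.sub ((measurable_const.sub (Real.measurable_exp.comp measurable_neg)).pow_const m))
  rw [lintegral_mul_const'' _ hgmeas.aemeasurable]
  have hgnn : 0 ≤ᵐ[volume.restrict (Set.Ioi (0:ℝ))]
      fun t => 1 - (1 - Real.exp (-t))^m := by
    refine (ae_restrict_iff' measurableSet_Ioi).2 (Eventually.of_forall fun t ht => ?_)
    rw [Set.mem_Ioi] at ht
    show (0:ℝ) ≤ 1 - (1 - Real.exp (-t))^m
    have hexp1 : Real.exp (-t) < 1 := by rw [Real.exp_lt_one_iff]; linarith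
    have hexp0 : 0 < Real.exp (-t) := Real.exp_pos _
    nlinarith [pow_le_one₀ (by linarith : (0:ℝ) ≤ 1 - Real.exp (-t))
      (by linarith : 1 - Real.exp (-t) ≤ 1) (n := m)]
  rw [← ofReal_integral_eq_lintegral_ofReal (oneDimInt m).1 hgnn, (oneDimInt m).2, hvol]
  ring

private lemma lemD {n : ℕ} (hn : 0 < n) (z : Cn n) (r : ℝ) (hr : 0 < r) :
    IntegrableOn (fun ζ : Cn n => Real.log r - Real.log (r - ‖ζ - z‖)) (ball z r) ∧
    ∫ ζ in ball z r, (Real.log r - Real.log (r - ‖ζ - z‖))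
      = (volume (ball z r)).toReal * ∑ j ∈ Finset.range (2*n), (1:ℝ)/(j+1) := by
  set F : Cn n → ℝ := fun ζ => Real.log r - Real.log (r - ‖ζ - z‖) with hF
  have hFmeas : Measurable F :=
    measurable_const.sub (Real.measurable_log.comp
      (measurable_const.sub (measurable_id.sub_const z).norm))
  have hF0 : ∀ ζ ∈ ball z r, 0 ≤ F ζ := by
    intro ζ hζ
    rw [mem_ball, dist_eq_norm] at hζ
    have h1 : 0 < r - ‖ζ - z‖ := by linarith
    have := (Real.log_le_log_iff h1 hr).2 (by linarith [norm_nonneg (ζ - z)])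
    simp only [hF]
    linarith
  have hnn : 0 ≤ᵐ[volume.restrict (ball z r)] F :=
    (ae_restrict_iff' measurableSet_ball).2 (Eventually.of_forall hF0)
  have hlcong : ∫⁻ a in ball z r, ‖F a‖ₑ
      = ∫⁻ a in ball z r, ENNReal.ofReal (F a) := by
    apply lintegral_congr_ae
    filter_upwards [hnn] with a ha
    exact Real.enorm_eq_ofReal ha
  have hfin : IntegrableOn F (ball z r) := by
    refine ⟨hFmeas.aestronglyMeasurable, ?_⟩
    show (∫⁻ a in ball z r, ‖F a‖ₑ) < ⊤
    rw [hlcong, lemC hn z r hr]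
    exact ENNReal.mul_lt_top measure_ball_lt_top ENNReal.ofReal_lt_top
  refine ⟨hfin, ?_⟩
  rw [integral_eq_lintegral_of_nonneg_ae hnn hFmeas.aestronglyMeasurable,
    lemC hn z r hr, ENNReal.toReal_mul, ENNReal.toReal_ofReal
      (Finset.sum_nonneg fun j _ => by positivity)]


end StmtTwoAux

/-- Theorem 2: a gradient bound by a majorant implies a Lipschitz-type mean estimate. -/
theorem stmt2 (n : ℕ) (ω : ℝ → ℝ) (hω : Majorant ω) (lam : ℝ) (hlam : 0 ≤ lam)
    (f : Cn n → ℂ) (hf : IsYukawa lam f) (C : ℝ) (hC : 0 < C)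
    (hg : ∀ z ∈ ball (0 : Cn n) 1, gradNorm f z ≤ C * ω (1 / (1 - ‖z‖))) :
    ∀ z ∈ ball (0 : Cn n) 1, ∀ r : ℝ, 0 < r → r ≤ 1 - ‖z‖ →
      (⨍ ζ in ball z r, ‖f ζ - f z‖) ≤
        C * Real.sqrt (2 * n) * (∑ j ∈ Finset.range (2 * n), (1 : ℝ) / (j + 1)) *
          r * ω (1 / r) := by
  intro z hz r hr hr2
  rcases Nat.eq_zero_or_pos n with hn0 | hn
  · subst hn0
    haveI : Subsingleton (Cn 0) := ⟨fun a b => by ext i; exact i.elim0⟩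
    have h0 : ∀ ζ : Cn 0, ‖f ζ - f z‖ = 0 := fun ζ => by
      rw [Subsingleton.elim ζ z]; simp
    simp only [h0]
    have hrhs : Real.sqrt (2 * (0:ℕ)) = 0 := by norm_num
    rw [hrhs]
    simp
  · have hd : DifferentiableOn ℝ f (ball (0:Cn n) 1) :=
      hf.1.differentiableOn (by norm_num)
    have hcd : ContinuousOn (fderiv ℝ f) (ball (0:Cn n) 1) :=
      hf.1.continuousOn_fderiv_of_isOpen isOpen_ball (by norm_num)
    set H := ∑ j ∈ Finset.range (2*n), (1:ℝ)/(j+1) with hH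
    have hHnn : 0 ≤ H := Finset.sum_nonneg fun j _ => by positivity
    set K := Real.sqrt 2 * C * ω (1/r) with hK
    have hωnn : 0 ≤ ω (1/r) := lemNN hω (by positivity)
    have hKnn : 0 ≤ K := by
      apply mul_nonneg (mul_nonneg (Real.sqrt_nonneg 2) hC.le) hωnn
    have hpt : ∀ ζ ∈ ball z r, ‖f ζ - f z‖
        ≤ K * (r * (Real.log r - Real.log (r - ‖ζ - z‖))) := fun ζ hζ =>
      lemB ω hω f C hC hd hcd hg z r hr hr2 ζ hζ
    obtain ⟨hint, hval⟩ := lemD hn z r hr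
    have hdomint : IntegrableOn
        (fun ζ : Cn n => K * (r * (Real.log r - Real.log (r - ‖ζ - z‖)))) (ball z r) := by
      have heq : (fun ζ : Cn n => K * (r * (Real.log r - Real.log (r - ‖ζ - z‖))))
          = fun ζ : Cn n => (K * r) * (Real.log r - Real.log (r - ‖ζ - z‖)) :=
        funext fun ζ => by ring
      rw [heq]
      exact hint.const_mul (K * r)
    have hmono : (∫ ζ in ball z r, ‖f ζ - f z‖)
        ≤ ∫ ζ in ball z r, K * (r * (Real.log r - Real.log (r - ‖ζ - z‖))) := by
      apply integral_mono_of_nonneg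
      · exact Filter.Eventually.of_forall fun ζ => norm_nonneg _
      · exact hdomint
      · exact (ae_restrict_iff' measurableSet_ball).2 (Filter.Eventually.of_forall hpt)
    have hval2 : ∫ ζ in ball z r, K * (r * (Real.log r - Real.log (r - ‖ζ - z‖)))
        = K * r * ((volume (ball z r)).toReal * H) := by
      rw [show (fun ζ : Cn n => K * (r * (Real.log r - Real.log (r - ‖ζ - z‖))))
          = fun ζ : Cn n => (K * r) * (Real.log r - Real.log (r - ‖ζ - z‖)) from
          funext fun ζ => by ring]
      rw [integral_const_mul, hval, hH, mul_assoc]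
    have hvpos : 0 < (volume (ball z r)).toReal :=
      ENNReal.toReal_pos (measure_ball_pos volume z hr).ne' measure_ball_lt_top.ne
    rw [setAverage_eq, smul_eq_mul]
    calc ((volume (ball z r)).toReal)⁻¹ * ∫ ζ in ball z r, ‖f ζ - f z‖
        ≤ ((volume (ball z r)).toReal)⁻¹ * (K * r * ((volume (ball z r)).toReal * H)) := by
          apply mul_le_mul_of_nonneg_left _ (inv_nonneg.2 hvpos.le)
          rw [← hval2]; exact hmono
      _ = K * r * H := by field_simp
      _ ≤ C * Real.sqrt (2 * n) * H * r * ω (1 / r) := by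
          have hs2 : Real.sqrt 2 ≤ Real.sqrt (2 * n) := by
            apply Real.sqrt_le_sqrt
            have : (1:ℝ) ≤ (n:ℝ) := by exact_mod_cast hn
            nlinarith
          calc K * r * H = Real.sqrt 2 * (C * ω (1/r) * r * H) := by rw [hK]; ring
            _ ≤ Real.sqrt (2*n) * (C * ω (1/r) * r * H) := by
                apply mul_le_mul_of_nonneg_right hs2
                positivity
            _ = C * Real.sqrt (2 * n) * H * r * ω (1 / r) := by ring
end
end

section
/- Let λ ≥ 0, p ∈ [4,∞), and let f : 𝔹ⁿ → ℂ be a solution to the Yukawa equation Δf = λf. Then |f|^p is twice continuously differentiable on 𝔹ⁿ and Δ(|f|^p) = p(p−2)|f|^{p−4} Σ_{k=1}^{n} |f·conj(f_{z_k}) + conj(f)·f_{z̄_k}|² + 2p|f|^{p−2}|∇̃f|² + pλ|f|^p ≥ 0 everywhere on 𝔹ⁿ (with the first term interpreted as 0 at zeros of f). -/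
open MeasureTheory Metric Complex
open scoped ENNReal NNReal

noncomputable section

-- derivative of conj ∘ f
lemma conj_hasFDerivAt {n : ℕ} {f : Cn n → ℂ} {z : Cn n} {F : Cn n →L[ℝ] ℂ}
    (hf : HasFDerivAt f F z) :
    HasFDerivAt (fun w => (starRingEnd ℂ) (f w))
      ((Complex.conjCLE.toContinuousLinearMap).comp F) z := by
  exact (Complex.conjCLE.toContinuousLinearMap.hasFDerivAt).comp z hf

-- derivative of u = (conj f * f).re
lemma u_hasFDerivAt {n : ℕ} {f : Cn n → ℂ} {z : Cn n} {F : Cn n →L[ℝ] ℂ}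
    (hf : HasFDerivAt f F z) :
    HasFDerivAt (fun w => ((starRingEnd ℂ) (f w) * f w).re)
      (Complex.reCLM.comp (((starRingEnd ℂ) (f z)) • F
        + ((Complex.conjCLE.toContinuousLinearMap).comp F).smulRight (f z))) z := by
  exact Complex.reCLM.hasFDerivAt.comp z ((conj_hasFDerivAt hf).mul' hf)

lemma u_fderiv_apply {n : ℕ} {f : Cn n → ℂ} {z : Cn n}
    (hf : DifferentiableAt ℝ f z) (v : Cn n) :
    fderiv ℝ (fun w => ((starRingEnd ℂ) (f w) * f w).re) z v
      = 2 * ((starRingEnd ℂ) (f z) * fderiv ℝ f z v).re := by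
  rw [(u_hasFDerivAt hf.hasFDerivAt).fderiv]
  simp [Complex.mul_re, Complex.conj_re, Complex.conj_im]
  ring

-- differentiability of w ↦ fderiv f w v at a point of C²-ness
lemma fderiv_apply_diff {n : ℕ} {f : Cn n → ℂ} {z : Cn n}
    (hf : ContDiffAt ℝ 2 f z) (v : Cn n) :
    DifferentiableAt ℝ (fun w => fderiv ℝ f w v) z := by
  have h1 : ContDiffAt ℝ 1 (fderiv ℝ f) z := hf.fderiv_right (by norm_num)
  exact (h1.differentiableAt (by norm_num)).clm_apply (differentiableAt_const v)

-- second derivative of u along v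
lemma u_second {n : ℕ} {f : Cn n → ℂ} {s : Set (Cn n)} (hs : IsOpen s)
    (hC : ∀ w ∈ s, ContDiffAt ℝ 2 f w) {z : Cn n} (hz : z ∈ s) (v : Cn n) :
    fderiv ℝ (fun w => fderiv ℝ (fun w' => ((starRingEnd ℂ) (f w') * f w').re) w v) z v
      = 2 * ((starRingEnd ℂ) (fderiv ℝ f z v) * fderiv ℝ f z v).re
        + 2 * ((starRingEnd ℂ) (f z) * fderiv ℝ (fun w => fderiv ℝ f w v) z v).re := by
  have hev : (fun w => fderiv ℝ (fun w' => ((starRingEnd ℂ) (f w') * f w').re) w v)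
      =ᶠ[nhds z] (fun w => 2 * ((starRingEnd ℂ) (f w) * fderiv ℝ f w v).re) := by
    filter_upwards [hs.mem_nhds hz] with w hw
    exact u_fderiv_apply ((hC w hw).differentiableAt (by norm_num)) v
  rw [hev.fderiv_eq]
  -- differentiate the product
  have hfz : DifferentiableAt ℝ f z := (hC z hz).differentiableAt (by norm_num)
  have hd : HasFDerivAt (fun w => fderiv ℝ f w v)
      (fderiv ℝ (fun w => fderiv ℝ f w v) z) z :=
    (fderiv_apply_diff (hC z hz) v).hasFDerivAt
  have hmul := ((conj_hasFDerivAt hfz.hasFDerivAt).mul' hd)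
  have h2 := (Complex.reCLM.hasFDerivAt.comp z hmul).const_mul (2:ℝ)
  have h3 : HasFDerivAt (fun w => 2 * ((starRingEnd ℂ) (f w) * fderiv ℝ f w v).re)
      ((2:ℝ) • Complex.reCLM.comp
        ((starRingEnd ℂ) (f z) • fderiv ℝ (fun w => fderiv ℝ f w v) z +
          ((Complex.conjCLE.toContinuousLinearMap).comp (fderiv ℝ f z)).smulRight
            (fderiv ℝ f z v))) z := by
    refine HasFDerivAt.congr_fderiv
      (by simpa only [Function.comp_def, Pi.mul_apply, Complex.reCLM_apply] using h2) ?_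
    refine ContinuousLinearMap.ext fun x => ?_
    simp [MulOpposite.smul_eq_mul_unop]
    ring
  rw [h3.fderiv]
  simp [Complex.mul_re, Complex.conj_re, Complex.conj_im]
  ring

-- first derivative of g^q (rpow), q ≥ 1, valid at all points since 1 ≤ q
lemma rpow_comp_hasFDerivAt {n : ℕ} {q : ℝ} (hq : 1 ≤ q) {g : Cn n → ℝ} {z : Cn n}
    {G : Cn n →L[ℝ] ℝ} (hg : HasFDerivAt g G z) :
    HasFDerivAt (fun w => g w ^ q) ((q * g z ^ (q - 1)) • G) z :=
  (Real.hasDerivAt_rpow_const (Or.inr hq)).comp_hasFDerivAt z hg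

lemma rpow_comp_fderiv_apply {n : ℕ} {q : ℝ} (hq : 1 ≤ q) {g : Cn n → ℝ} {z : Cn n}
    (hg : DifferentiableAt ℝ g z) (v : Cn n) :
    fderiv ℝ (fun w => g w ^ q) z v = q * g z ^ (q - 1) * fderiv ℝ g z v := by
  rw [(rpow_comp_hasFDerivAt hq hg.hasFDerivAt).fderiv]; simp [mul_assoc]

-- second derivative of g^q along v, for q ≥ 2, g differentiable on open s, g C1-deriv diff at z
lemma rpow_comp_second {n : ℕ} {q : ℝ} (hq : 2 ≤ q) {g : Cn n → ℝ} {s : Set (Cn n)}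
    (hs : IsOpen s) (hgd : ∀ w ∈ s, DifferentiableAt ℝ g w) {z : Cn n} (hz : z ∈ s)
    (v : Cn n) (hg2 : DifferentiableAt ℝ (fun w => fderiv ℝ g w v) z) :
    fderiv ℝ (fun w => fderiv ℝ (fun w' => g w' ^ q) w v) z v
      = q * (q - 1) * g z ^ (q - 2) * (fderiv ℝ g z v) ^ 2
        + q * g z ^ (q - 1) * fderiv ℝ (fun w => fderiv ℝ g w v) z v := by
  have hev : (fun w => fderiv ℝ (fun w' => g w' ^ q) w v)
      =ᶠ[nhds z] (fun w => q * g w ^ (q - 1) * fderiv ℝ g w v) := by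
    filter_upwards [hs.mem_nhds hz] with w hw
    exact rpow_comp_fderiv_apply (by linarith) (hgd w hw) v
  rw [hev.fderiv_eq]
  have hpow : HasFDerivAt (fun w => g w ^ (q - 1))
      (((q - 1) * g z ^ (q - 2)) • fderiv ℝ g z) z := by
    have := rpow_comp_hasFDerivAt (q := q - 1) (by linarith) (hgd z hz).hasFDerivAt
    convert this using 2
    ring_nf
  have hc : HasFDerivAt (fun w => q * g w ^ (q - 1))
      (q • (((q - 1) * g z ^ (q - 2)) • fderiv ℝ g z)) z := hpow.const_mul q
  have hprod := hc.mul hg2.hasFDerivAt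
  rw [HasFDerivAt.fderiv (f := fun w => q * g w ^ (q - 1) * fderiv ℝ g w v) hprod]
  simp only [ContinuousLinearMap.add_apply, ContinuousLinearMap.smul_apply, smul_eq_mul]
  ring

lemma u_fderiv_diff {n : ℕ} {f : Cn n → ℂ} {s : Set (Cn n)} (hs : IsOpen s)
    (hC : ∀ w ∈ s, ContDiffAt ℝ 2 f w) {z : Cn n} (hz : z ∈ s) (v : Cn n) :
    DifferentiableAt ℝ
      (fun w => fderiv ℝ (fun w' => ((starRingEnd ℂ) (f w') * f w').re) w v) z := by
  have hev : (fun w => fderiv ℝ (fun w' => ((starRingEnd ℂ) (f w') * f w').re) w v)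
      =ᶠ[nhds z] (fun w => 2 * ((starRingEnd ℂ) (f w) * fderiv ℝ f w v).re) := by
    filter_upwards [hs.mem_nhds hz] with w hw
    exact u_fderiv_apply ((hC w hw).differentiableAt (by norm_num)) v
  rw [hev.differentiableAt_iff]
  have hfz : DifferentiableAt ℝ f z := (hC z hz).differentiableAt (by norm_num)
  have hd : HasFDerivAt (fun w => fderiv ℝ f w v)
      (fderiv ℝ (fun w => fderiv ℝ f w v) z) z :=
    (fderiv_apply_diff (hC z hz) v).hasFDerivAt
  have hmul := ((conj_hasFDerivAt hfz.hasFDerivAt).mul' hd)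
  simpa only [Function.comp_def, Pi.mul_apply, Complex.reCLM_apply] using
    ((Complex.reCLM.hasFDerivAt.comp z hmul).const_mul (2:ℝ)).differentiableAt

lemma u_diff {n : ℕ} {f : Cn n → ℂ} {z : Cn n} (hf : DifferentiableAt ℝ f z) :
    DifferentiableAt ℝ (fun w => ((starRingEnd ℂ) (f w) * f w).re) z :=
  (u_hasFDerivAt hf.hasFDerivAt).differentiableAt

lemma master {n : ℕ} {f : Cn n → ℂ} {s : Set (Cn n)} (hs : IsOpen s)
    (hC : ∀ w ∈ s, ContDiffAt ℝ 2 f w) {z : Cn n} (hz : z ∈ s) {q : ℝ} (hq : 2 ≤ q)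
    (v : Cn n) :
    fderiv ℝ (fun w => fderiv ℝ (fun w' => ((starRingEnd ℂ) (f w') * f w').re ^ q) w v) z v
      = q * (q - 1) * ((starRingEnd ℂ) (f z) * f z).re ^ (q - 2) *
          (2 * ((starRingEnd ℂ) (f z) * fderiv ℝ f z v).re) ^ 2
        + q * ((starRingEnd ℂ) (f z) * f z).re ^ (q - 1) *
          (2 * ((starRingEnd ℂ) (fderiv ℝ f z v) * fderiv ℝ f z v).re
            + 2 * ((starRingEnd ℂ) (f z) *
                fderiv ℝ (fun w => fderiv ℝ f w v) z v).re) := by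
  rw [rpow_comp_second hq hs (fun w hw => u_diff ((hC w hw).differentiableAt (by norm_num)))
      hz v (u_fderiv_diff hs hC hz v),
    u_fderiv_apply ((hC z hz).differentiableAt (by norm_num)) v,
    u_second hs hC hz v]

lemma I1' (F c d : ℂ) :
    (2 * ((starRingEnd ℂ) F * (c + d)).re) ^ 2
      + (2 * ((starRingEnd ℂ) F * (Complex.I * (c - d))).re) ^ 2
    = 4 * ‖F * (starRingEnd ℂ) c + (starRingEnd ℂ) F * d‖ ^ 2 := by
  rw [Complex.sq_norm]
  simp only [Complex.normSq_apply, Complex.mul_re, Complex.mul_im, Complex.add_re,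
    Complex.add_im, Complex.sub_re, Complex.sub_im, Complex.I_re, Complex.I_im,
    Complex.conj_re, Complex.conj_im]
  ring

lemma I2' (c d : ℂ) :
    2 * ((starRingEnd ℂ) (c + d) * (c + d)).re
      + 2 * ((starRingEnd ℂ) (Complex.I * (c - d)) * (Complex.I * (c - d))).re
    = 4 * (‖c‖ ^ 2 + ‖d‖ ^ 2) := by
  rw [Complex.sq_norm, Complex.sq_norm]
  simp only [Complex.normSq_apply, Complex.mul_re, Complex.mul_im, Complex.add_re,
    Complex.add_im, Complex.sub_re, Complex.sub_im, Complex.I_re, Complex.I_im,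
    Complex.conj_re, Complex.conj_im]
  ring

lemma I3 (lam : ℝ) (F : ℂ) :
    2 * ((starRingEnd ℂ) F * ((lam : ℂ) * F)).re
      = 2 * (lam * ((starRingEnd ℂ) F * F).re) := by
  simp only [Complex.mul_re, Complex.mul_im, Complex.conj_re, Complex.conj_im,
    Complex.ofReal_re, Complex.ofReal_im]
  ring

lemma abs_rpow_eq (x : ℂ) (p : ℝ) :
    ‖x‖ ^ p = ((starRingEnd ℂ) x * x).re ^ (p / 2 : ℝ) := by
  have h1 : ((starRingEnd ℂ) x * x).re = ‖x‖ ^ (2 : ℕ) := by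
    rw [Complex.sq_norm]
    simp [Complex.normSq_apply, Complex.mul_re, Complex.conj_re, Complex.conj_im]
  rw [h1, ← Real.rpow_natCast (‖x‖) 2, ← Real.rpow_mul (norm_nonneg _)]
  ring_nf

lemma u_eq_abs_sq (x : ℂ) : ((starRingEnd ℂ) x * x).re = ‖x‖ ^ (2:ℝ) := by
  rw [show ‖x‖ ^ (2:ℝ) = ‖x‖ ^ (2:ℕ) by
    rw [← Real.rpow_natCast (‖x‖) 2]; norm_num]
  rw [Complex.sq_norm]
  simp [Complex.normSq_apply, Complex.mul_re, Complex.conj_re, Complex.conj_im]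

set_option maxHeartbeats 1600000 in
/-- For `p ≥ 4`, `|f|^p` is C² and `Δ(|f|^p) = Ψ_p ≥ 0` on the unit ball. -/
theorem stmt13 (n : ℕ) (lam : ℝ) (hlam : 0 ≤ lam) (p : ℝ) (hp : 4 ≤ p)
    (f : Cn n → ℂ) (hf : IsYukawa lam f) :
    ContDiffOn ℝ 2 (fun z => ‖f z‖ ^ p) (ball (0 : Cn n) 1) ∧
    ∀ z ∈ ball (0 : Cn n) 1,
      lap (fun w => ‖f w‖ ^ p) z = Psi p lam f z ∧ 0 ≤ Psi p lam f z := by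
  obtain ⟨hf1, hf2⟩ := hf
  have hs : IsOpen (ball (0 : Cn n) 1) := isOpen_ball
  have hC : ∀ w ∈ ball (0 : Cn n) 1, ContDiffAt ℝ 2 f w :=
    fun w hw => hf1.contDiffAt (hs.mem_nhds hw)
  have hfun : (fun w => ‖f w‖ ^ p)
      = (fun w => ((starRingEnd ℂ) (f w) * f w).re ^ (p / 2 : ℝ)) :=
    funext fun w => abs_rpow_eq (f w) p
  have hq : (2:ℝ) ≤ p / 2 := by linarith
  constructor
  · -- smoothness
    rw [hfun]
    have hconj : ContDiffOn ℝ 2 (fun w => (starRingEnd ℂ) (f w)) (ball (0:Cn n) 1) := by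
      have := Complex.conjCLE.toContinuousLinearMap.contDiff.comp_contDiffOn hf1
      simpa [Function.comp_def] using this
    have hmul : ContDiffOn ℝ 2 (fun w => (starRingEnd ℂ) (f w) * f w) (ball (0:Cn n) 1) :=
      hconj.mul hf1
    have hu : ContDiffOn ℝ 2 (fun w => ((starRingEnd ℂ) (f w) * f w).re) (ball (0:Cn n) 1) := by
      have := Complex.reCLM.contDiff.comp_contDiffOn hmul
      simpa [Function.comp_def] using this
    have houter : ContDiff ℝ 2 (fun t : ℝ => t ^ (p/2 : ℝ)) := by
      have := Real.contDiff_rpow_const_of_le (p := p/2) (n := 2) (by exact_mod_cast hq)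
      exact_mod_cast this
    have := houter.comp_contDiffOn hu
    simpa [Function.comp_def] using this
  · intro z hz
    have hU0 : (0:ℝ) ≤ ‖f z‖ := norm_nonneg _
    constructor
    · -- Laplacian formula
      rw [hfun]
      show lap (fun w => ((starRingEnd ℂ) (f w) * f w).re ^ (p / 2 : ℝ)) z = Psi p lam f z
      unfold lap
      have hM := master hs hC hz hq
      simp only [hM]
      -- abbreviations (purely notational)
      have step1 : (∑ k : Fin n,
          ((p/2) * (p/2 - 1) * ((starRingEnd ℂ) (f z) * f z).re ^ (p/2 - 2) *
              (2 * ((starRingEnd ℂ) (f z) *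
                fderiv ℝ f z (EuclideanSpace.single k (1:ℂ))).re) ^ 2
            + (p/2) * ((starRingEnd ℂ) (f z) * f z).re ^ (p/2 - 1) *
              (2 * ((starRingEnd ℂ) (fderiv ℝ f z (EuclideanSpace.single k (1:ℂ))) *
                  fderiv ℝ f z (EuclideanSpace.single k (1:ℂ))).re
                + 2 * ((starRingEnd ℂ) (f z) *
                    fderiv ℝ (fun w => fderiv ℝ f w (EuclideanSpace.single k (1:ℂ))) z
                      (EuclideanSpace.single k (1:ℂ))).re)
          + ((p/2) * (p/2 - 1) * ((starRingEnd ℂ) (f z) * f z).re ^ (p/2 - 2) *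
              (2 * ((starRingEnd ℂ) (f z) *
                fderiv ℝ f z (EuclideanSpace.single k Complex.I)).re) ^ 2
            + (p/2) * ((starRingEnd ℂ) (f z) * f z).re ^ (p/2 - 1) *
              (2 * ((starRingEnd ℂ) (fderiv ℝ f z (EuclideanSpace.single k Complex.I)) *
                  fderiv ℝ f z (EuclideanSpace.single k Complex.I)).re
                + 2 * ((starRingEnd ℂ) (f z) *
                    fderiv ℝ (fun w => fderiv ℝ f w (EuclideanSpace.single k Complex.I)) z
                      (EuclideanSpace.single k Complex.I)).re))))
        = (p/2) * (p/2 - 1) * ((starRingEnd ℂ) (f z) * f z).re ^ (p/2 - 2) *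
            (∑ k : Fin n,
              ((2 * ((starRingEnd ℂ) (f z) *
                  fderiv ℝ f z (EuclideanSpace.single k (1:ℂ))).re) ^ 2
               + (2 * ((starRingEnd ℂ) (f z) *
                  fderiv ℝ f z (EuclideanSpace.single k Complex.I)).re) ^ 2))
          + (p/2) * ((starRingEnd ℂ) (f z) * f z).re ^ (p/2 - 1) *
            (∑ k : Fin n,
              (2 * ((starRingEnd ℂ) (fderiv ℝ f z (EuclideanSpace.single k (1:ℂ))) *
                  fderiv ℝ f z (EuclideanSpace.single k (1:ℂ))).re
               + 2 * ((starRingEnd ℂ) (fderiv ℝ f z (EuclideanSpace.single k Complex.I)) *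
                  fderiv ℝ f z (EuclideanSpace.single k Complex.I)).re))
          + (p/2) * ((starRingEnd ℂ) (f z) * f z).re ^ (p/2 - 1) *
            (2 * ((starRingEnd ℂ) (f z) * lap f z).re) := by
        unfold lap
        simp only [Finset.mul_sum, Complex.re_sum]
        rw [← Finset.sum_add_distrib, ← Finset.sum_add_distrib]
        refine Finset.sum_congr rfl fun k _ => ?_
        simp only [mul_add, Complex.add_re]
        ring
      rw [step1, hf2 z hz, I3]
      have ha : ∀ k : Fin n, fderiv ℝ f z (EuclideanSpace.single k (1:ℂ))
          = wderiv f z k + wderivBar f z k := fun k => by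
        simp only [wderiv, wderivBar]; ring
      have hb : ∀ k : Fin n, fderiv ℝ f z (EuclideanSpace.single k Complex.I)
          = Complex.I * (wderiv f z k - wderivBar f z k) := fun k => by
        simp only [wderiv, wderivBar]
        linear_combination (fderiv ℝ f z (EuclideanSpace.single k Complex.I)) *
          Complex.I_mul_I
      have hS1 : (∑ k : Fin n,
            ((2 * ((starRingEnd ℂ) (f z) *
                fderiv ℝ f z (EuclideanSpace.single k (1:ℂ))).re) ^ 2
             + (2 * ((starRingEnd ℂ) (f z) *
                fderiv ℝ f z (EuclideanSpace.single k Complex.I)).re) ^ 2))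
          = 4 * ∑ k : Fin n,
              ‖f z * (starRingEnd ℂ) (wderiv f z k)
                + (starRingEnd ℂ) (f z) * wderivBar f z k‖ ^ 2 := by
        rw [Finset.mul_sum]
        refine Finset.sum_congr rfl fun k _ => ?_
        rw [ha k, hb k]; exact I1' (f z) _ _
      have hS2 : (∑ k : Fin n,
            (2 * ((starRingEnd ℂ) (fderiv ℝ f z (EuclideanSpace.single k (1:ℂ))) *
                fderiv ℝ f z (EuclideanSpace.single k (1:ℂ))).re
             + 2 * ((starRingEnd ℂ) (fderiv ℝ f z (EuclideanSpace.single k Complex.I)) *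
                fderiv ℝ f z (EuclideanSpace.single k Complex.I)).re))
          = 4 * ∑ k : Fin n,
              (‖wderiv f z k‖ ^ 2 + ‖wderivBar f z k‖ ^ 2) := by
        rw [Finset.mul_sum]
        refine Finset.sum_congr rfl fun k _ => ?_
        rw [ha k, hb k]; exact I2' _ _
      rw [hS1, hS2]
      have hG : gradNorm f z ^ 2
          = ∑ k : Fin n, (‖wderiv f z k‖ ^ 2 + ‖wderivBar f z k‖ ^ 2) := by
        unfold gradNorm
        rw [Real.sq_sqrt]
        positivity
      have hU : ((starRingEnd ℂ) (f z) * f z).re = ‖f z‖ ^ (2:ℝ) :=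
        u_eq_abs_sq (f z)
      rw [hU]
      have hpow1 : (‖f z‖ ^ (2:ℝ)) ^ (p/2 - 2 : ℝ) = ‖f z‖ ^ (p - 4) := by
        rw [← Real.rpow_mul hU0, show (2:ℝ) * (p/2 - 2) = p - 4 by ring]
      have hpow2 : (‖f z‖ ^ (2:ℝ)) ^ (p/2 - 1 : ℝ) = ‖f z‖ ^ (p - 2) := by
        rw [← Real.rpow_mul hU0, show (2:ℝ) * (p/2 - 1) = p - 2 by ring]
      have hpow3 : ‖f z‖ ^ (p - 2) * ‖f z‖ ^ (2:ℝ)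
          = ‖f z‖ ^ p := by
        rw [← Real.rpow_add' hU0 (by linarith : (0:ℝ) < p - 2 + 2).ne',
          show p - 2 + 2 = p by ring]
      rw [hpow1, hpow2]
      unfold Psi
      rw [← hpow3, hG]
      ring
    · -- nonnegativity
      unfold Psi
      have h1 : (0:ℝ) ≤ p * (p - 2) := by nlinarith
      refine add_nonneg (add_nonneg ?_ ?_) ?_
      · exact mul_nonneg (mul_nonneg h1 (Real.rpow_nonneg hU0 _))
          (Finset.sum_nonneg fun k _ => sq_nonneg _)
      · exact mul_nonneg (mul_nonneg (by linarith : (0:ℝ) ≤ 2 * p)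
          (Real.rpow_nonneg hU0 _)) (sq_nonneg _)
      · exact mul_nonneg (mul_nonneg (by linarith : (0:ℝ) ≤ p) hlam)
          (Real.rpow_nonneg hU0 _)
end
end

section
/- Let ω be a majorant and let f : 𝔹ⁿ → ℂ be continuously differentiable with |∇̃f(z)| ≤ C·ω(1/d(z)) for all z ∈ 𝔹ⁿ, where C > 0. Then for all z, w ∈ 𝔹ⁿ with |w − z| < d(z), |f(z) − f(w)| ≤ C√(2n) ∫₀^{|w−z|} ω(1/(d(z) − t)) dt. -/
open MeasureTheory Metric Complex
open scoped ENNReal NNReal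

noncomputable section

lemma decomp' {n : ℕ} (h : Cn n) :
    h = ∑ k : Fin n, ((h k).re • EuclideanSpace.single k (1:ℂ) + (h k).im • EuclideanSpace.single k Complex.I) := by
  ext j
  rw [WithLp.ofLp_sum, Finset.sum_apply]
  rw [Finset.sum_eq_single j]
  · simp [EuclideanSpace.single_apply, Complex.real_smul, Complex.ext_iff]
  · intro b _ hb
    simp [EuclideanSpace.single_apply, Ne.symm hb]
  · simp

lemma Lapply' {n : ℕ} (L : Cn n →L[ℝ] ℂ) (h : Cn n) :
    L h = ∑ k : Fin n, ((h k).re • L (EuclideanSpace.single k (1:ℂ)) + (h k).im • L (EuclideanSpace.single k Complex.I)) := by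
  conv_lhs => rw [decomp' h]
  simp [map_sum]

lemma conj_eq' (c : ℂ) : (starRingEnd ℂ) c = (c.re:ℂ) - c.im * Complex.I := by
  simp [Complex.ext_iff]

lemma key' (A B c : ℂ) : (A - Complex.I*B)/2 * c + (A + Complex.I*B)/2 * (starRingEnd ℂ) c = c.re • A + c.im • B := by
  rw [Complex.real_smul, Complex.real_smul, conj_eq']
  nth_rewrite 1 [← Complex.re_add_im c]
  linear_combination (-(B * c.im)) * Complex.I_sq

lemma fderiv_bound' {n : ℕ} (f : Cn n → ℂ) (x h : Cn n) :
    ‖fderiv ℝ f x h‖ ≤ Real.sqrt 2 * gradNorm f x * ‖h‖ := by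
  have h1 : fderiv ℝ f x h
      = ∑ k : Fin n, ((wderiv f x k) * h k + (wderivBar f x k) * (starRingEnd ℂ) (h k)) := by
    rw [Lapply' (fderiv ℝ f x) h]
    refine Finset.sum_congr rfl fun k _ => ?_
    rw [← key']
    simp [wderiv, wderivBar]
  have h2 : ‖fderiv ℝ f x h‖
      ≤ ∑ k : Fin n, (‖wderiv f x k‖ + ‖wderivBar f x k‖) * ‖h k‖ := by
    rw [h1]
    refine le_trans (norm_sum_le _ _) (Finset.sum_le_sum fun k _ => ?_)
    rw [add_mul]
    refine le_trans (norm_add_le _ _) (add_le_add ?_ ?_)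
    · rw [norm_mul]
    · rw [norm_mul, Complex.norm_conj]
  have h3 : ∑ k : Fin n, (‖wderiv f x k‖ + ‖wderivBar f x k‖) * ‖h k‖
      ≤ Real.sqrt (∑ k : Fin n, (‖wderiv f x k‖ + ‖wderivBar f x k‖)^2)
        * Real.sqrt (∑ k : Fin n, ‖h k‖^2) := by
    have := Finset.sum_mul_sq_le_sq_mul_sq Finset.univ
      (fun k : Fin n => ‖wderiv f x k‖ + ‖wderivBar f x k‖)
      (fun k : Fin n => ‖h k‖)
    have hnn : (0:ℝ) ≤ ∑ k : Fin n, (‖wderiv f x k‖ + ‖wderivBar f x k‖) * ‖h k‖ :=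
      Finset.sum_nonneg fun k _ => mul_nonneg (by positivity) (norm_nonneg _)
    rw [← Real.sqrt_mul_self hnn, ← Real.sqrt_mul (by positivity)]
    exact Real.sqrt_le_sqrt (by simpa [sq] using this)
  have h4 : Real.sqrt (∑ k : Fin n, (‖wderiv f x k‖ + ‖wderivBar f x k‖)^2)
      ≤ Real.sqrt 2 * gradNorm f x := by
    rw [gradNorm, ← Real.sqrt_mul (by norm_num)]
    refine Real.sqrt_le_sqrt ?_
    rw [Finset.mul_sum]
    exact Finset.sum_le_sum fun k _ => by nlinarith [sq_nonneg (‖wderiv f x k‖ - ‖wderivBar f x k‖)]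
  have h5 : Real.sqrt (∑ k : Fin n, ‖h k‖^2) = ‖h‖ := (EuclideanSpace.norm_eq h).symm
  calc ‖fderiv ℝ f x h‖ ≤ _ := h2
    _ ≤ _ := h3
    _ ≤ Real.sqrt 2 * gradNorm f x * ‖h‖ := by
        rw [h5]; exact mul_le_mul_of_nonneg_right h4 (norm_nonneg _)

/-- The basic Lipschitz-type estimate along segments for a C¹ map whose Wirtinger
gradient is bounded by a majorant. -/
theorem stmt14 (n : ℕ) (ω : ℝ → ℝ) (hω : Majorant ω)
    (f : Cn n → ℂ) (hf : ContDiffOn ℝ 1 f (ball (0 : Cn n) 1))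
    (C : ℝ) (hC : 0 < C)
    (hg : ∀ z ∈ ball (0 : Cn n) 1, gradNorm f z ≤ C * ω (1 / (1 - ‖z‖))) :
    ∀ z ∈ ball (0 : Cn n) 1, ∀ w ∈ ball (0 : Cn n) 1, ‖w - z‖ < 1 - ‖z‖ →
      ‖f z - f w‖ ≤
        C * Real.sqrt (2 * n) * ∫ t in (0:ℝ)..(‖w - z‖), ω (1 / (1 - ‖z‖ - t)) := by
  obtain ⟨hwc, hwm, hw0, -⟩ := hω
  have hwnn : ∀ s ∈ Set.Ici (0:ℝ), 0 ≤ ω s := fun s hs => by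
    have := hwm Set.self_mem_Ici hs hs
    rwa [hw0] at this
  intro z hz w hw hlt
  by_cases hwz : w = z
  · subst hwz; simp
  set L : ℝ := ‖w - z‖ with hLdef
  have hL0 : 0 < L := norm_pos_iff.mpr (sub_ne_zero.mpr hwz)
  have hn : 1 ≤ n := by
    rcases Nat.eq_zero_or_pos n with h0 | h0
    · exfalso; apply hwz; subst h0; exact Subsingleton.elim w z
    · exact h0
  set u : Cn n := L⁻¹ • (w - z) with hu
  have hunorm : ‖u‖ = 1 := by
    rw [hu, norm_smul, norm_inv, norm_norm, ← hLdef, inv_mul_cancel₀ hL0.ne']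
  set γ : ℝ → Cn n := fun t => z + t • u with hγ
  have hz1 : ‖z‖ < 1 := mem_ball_zero_iff.mp hz
  have hγnorm : ∀ t, ‖γ t‖ ≤ ‖z‖ + |t| := by
    intro t
    calc ‖z + t • u‖ ≤ ‖z‖ + ‖t • u‖ := norm_add_le _ _
      _ = ‖z‖ + |t| := by rw [norm_smul, hunorm, mul_one, Real.norm_eq_abs]
  have hmem : ∀ t ∈ Set.Icc (0:ℝ) L, γ t ∈ ball (0 : Cn n) 1 := by
    intro t ht
    rw [mem_ball_zero_iff]
    have := hγnorm t
    rw [_root_.abs_of_nonneg ht.1] at this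
    linarith [ht.2, hlt]
  have hpos : ∀ t ∈ Set.Icc (0:ℝ) L, 0 < 1 - ‖z‖ - t := by
    intro t ht; have := ht.2; linarith [hlt]
  have hderiv : ∀ t ∈ Set.Icc (0:ℝ) L, HasDerivAt (fun s => f (γ s)) (fderiv ℝ f (γ t) u) t := by
    intro t ht
    have hd : DifferentiableAt ℝ f (γ t) :=
      (hf.differentiableOn one_ne_zero).differentiableAt (isOpen_ball.mem_nhds (hmem t ht))
    have hline : HasDerivAt γ u t := by
      have h' := ((hasDerivAt_id t).smul_const u).const_add z
      rw [one_smul] at h'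
      exact h'
    exact hd.hasFDerivAt.comp_hasDerivAt t hline
  have hγcont : Continuous γ := by
    exact continuous_const.add (continuous_id.smul continuous_const)
  have hg'cont : ContinuousOn (fun t => fderiv ℝ f (γ t) u) (Set.Icc (0:ℝ) L) := by
    have hfd : ContinuousOn (fderiv ℝ f) (ball (0 : Cn n) 1) :=
      hf.continuousOn_fderiv_of_isOpen isOpen_ball le_rfl
    exact (hfd.comp hγcont.continuousOn hmem).clm_apply continuousOn_const
  have hg'int : IntervalIntegrable (fun t => fderiv ℝ f (γ t) u) volume 0 L := by
    apply ContinuousOn.intervalIntegrable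
    rwa [Set.uIcc_of_le hL0.le]
  have hftc : (∫ t in (0:ℝ)..L, fderiv ℝ f (γ t) u) = f (γ L) - f (γ 0) :=
    intervalIntegral.integral_eq_sub_of_hasDerivAt
      (fun t ht => hderiv t (by rwa [Set.uIcc_of_le hL0.le] at ht)) hg'int
  have hγ0 : γ 0 = z := by simp [hγ]
  have hγL : γ L = w := by
    rw [hγ]
    simp only [hu, smul_smul, mul_inv_cancel₀ hL0.ne', one_smul]
    abel
  -- the majorizing function
  set φ : ℝ → ℝ := fun t => C * Real.sqrt (2 * n) * ω (1 / (1 - ‖z‖ - t)) with hφ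
  have hinner : ContinuousOn (fun t => 1 / (1 - ‖z‖ - t)) (Set.Icc (0:ℝ) L) := by
    exact continuousOn_const.div
      (by fun_prop) (fun t ht => (hpos t ht).ne')
  have hmaps : ∀ t ∈ Set.Icc (0:ℝ) L, 1 / (1 - ‖z‖ - t) ∈ Set.Ici (0:ℝ) := by
    intro t ht
    exact le_of_lt (div_pos one_pos (hpos t ht))
  have hφcont : ContinuousOn φ (Set.Icc (0:ℝ) L) :=
    continuousOn_const.mul (hwc.comp hinner hmaps)
  have hφint : IntervalIntegrable φ volume 0 L := by
    apply ContinuousOn.intervalIntegrable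
    rwa [Set.uIcc_of_le hL0.le]
  have hsqrt2 : Real.sqrt 2 ≤ Real.sqrt (2 * n) := by
    apply Real.sqrt_le_sqrt
    have : (1:ℝ) ≤ (n:ℝ) := by exact_mod_cast hn
    nlinarith
  have hbound : ∀ t ∈ Set.Icc (0:ℝ) L, ‖fderiv ℝ f (γ t) u‖ ≤ φ t := by
    intro t ht
    have h1 : ‖fderiv ℝ f (γ t) u‖ ≤ Real.sqrt 2 * gradNorm f (γ t) := by
      have := fderiv_bound' f (γ t) u
      rwa [hunorm, mul_one] at this
    have h2 : gradNorm f (γ t) ≤ C * ω (1 / (1 - ‖γ t‖)) := hg _ (hmem t ht)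
    have hpt : 0 < 1 - ‖z‖ - t := hpos t ht
    have hγt1 : ‖γ t‖ < 1 := mem_ball_zero_iff.mp (hmem t ht)
    have h3 : ω (1 / (1 - ‖γ t‖)) ≤ ω (1 / (1 - ‖z‖ - t)) := by
      apply hwm
      · exact le_of_lt (div_pos one_pos (show (0:ℝ) < 1 - ‖γ t‖ by linarith))
      · exact hmaps t ht
      · apply one_div_le_one_div_of_le hpt
        have := hγnorm t
        rw [_root_.abs_of_nonneg ht.1] at this
        linarith
    have hωnn : 0 ≤ ω (1 / (1 - ‖z‖ - t)) := hwnn _ (hmaps t ht)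
    calc ‖fderiv ℝ f (γ t) u‖ ≤ Real.sqrt 2 * gradNorm f (γ t) := h1
      _ ≤ Real.sqrt 2 * (C * ω (1 / (1 - ‖γ t‖))) := by
          apply mul_le_mul_of_nonneg_left h2 (Real.sqrt_nonneg 2)
      _ ≤ Real.sqrt 2 * (C * ω (1 / (1 - ‖z‖ - t))) := by
          apply mul_le_mul_of_nonneg_left _ (Real.sqrt_nonneg 2)
          exact mul_le_mul_of_nonneg_left h3 hC.le
      _ ≤ φ t := by
          rw [hφ]
          have : Real.sqrt 2 * (C * ω (1 / (1 - ‖z‖ - t)))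
              ≤ Real.sqrt (2 * n) * (C * ω (1 / (1 - ‖z‖ - t))) :=
            mul_le_mul_of_nonneg_right hsqrt2 (by positivity)
          calc Real.sqrt 2 * (C * ω (1 / (1 - ‖z‖ - t))) ≤ _ := this
            _ = C * Real.sqrt (2 * n) * ω (1 / (1 - ‖z‖ - t)) := by ring
  have hnormint : ‖∫ t in (0:ℝ)..L, fderiv ℝ f (γ t) u‖ ≤ |∫ t in (0:ℝ)..L, φ t| := by
    apply intervalIntegral.norm_integral_le_abs_of_norm_le _ hφint
    filter_upwards [MeasureTheory.ae_restrict_mem measurableSet_uIoc] with t ht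
    rw [Set.uIoc_of_le hL0.le] at ht
    exact hbound t ⟨ht.1.le, ht.2⟩
  have hφnn : 0 ≤ ∫ t in (0:ℝ)..L, φ t := by
    apply intervalIntegral.integral_nonneg hL0.le
    intro t ht
    have : 0 ≤ ω (1 / (1 - ‖z‖ - t)) := hwnn _ (hmaps t ht)
    rw [hφ]
    positivity
  have hφeq : (∫ t in (0:ℝ)..L, φ t)
      = C * Real.sqrt (2 * n) * ∫ t in (0:ℝ)..L, ω (1 / (1 - ‖z‖ - t)) := by
    rw [hφ, intervalIntegral.integral_const_mul]
  calc ‖f z - f w‖ = ‖f (γ L) - f (γ 0)‖ := by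
        rw [hγ0, hγL, norm_sub_rev]
    _ = ‖∫ t in (0:ℝ)..L, fderiv ℝ f (γ t) u‖ := by rw [hftc]
    _ ≤ |∫ t in (0:ℝ)..L, φ t| := hnormint
    _ = ∫ t in (0:ℝ)..L, φ t := abs_of_nonneg hφnn
    _ = C * Real.sqrt (2 * n) * ∫ t in (0:ℝ)..L, ω (1 / (1 - ‖z‖ - t)) := hφeq
end
end

section
/- Let λ ≥ 0, p ∈ [2,∞), and let f : 𝔹ⁿ → ℂ be a solution to the Yukawa equation Δf = λf. Then r ↦ M_p^p(r,f) is differentiable on (0,1) and for all r ∈ (0,1), (d/dr) M_p^p(r, f) ≤ p√2 ∫_{∂𝔹ⁿ} |f(rζ)|^{p−1} |∇̃f(rζ)| dσ(ζ). -/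
open MeasureTheory Metric Complex
open scoped ENNReal NNReal

noncomputable section

lemma euclid_decomp {n : ℕ} (w : Cn n) : w = ∑ k : Fin n, (w k) • EuclideanSpace.single k (1:ℂ) := by
  have h := (EuclideanSpace.basisFun (Fin n) ℂ).sum_repr w
  simp only [EuclideanSpace.basisFun_apply, EuclideanSpace.basisFun_repr] at h
  exact h.symm

lemma single_split {n : ℕ} (k : Fin n) (c : ℂ) : c • EuclideanSpace.single k (1:ℂ)
    = c.re • EuclideanSpace.single k (1:ℂ) + c.im • EuclideanSpace.single k Complex.I := by
  ext j
  simp only [PiLp.add_apply, PiLp.smul_apply, EuclideanSpace.single_apply]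
  by_cases h : j = k <;> simp [h, Complex.real_smul, smul_eq_mul]

lemma conj_eq_re_sub_im' (c : ℂ) : (starRingEnd ℂ) c = (c.re : ℂ) - (c.im : ℂ) * Complex.I := by
  rw [Complex.ext_iff]; simp

lemma abs_fderiv_le {n : ℕ} (f : Cn n → ℂ) (z : Cn n) (w : Cn n) (hw : ‖w‖ = 1) :
    ‖fderiv ℝ f z w‖ ≤ Real.sqrt 2 * gradNorm f z := by
  set L := fderiv ℝ f z with hL
  have key : ∀ (x y : ℝ) (a b : ℂ), (x:ℂ)*a + (y:ℂ)*b
      = ((x:ℂ) + (y:ℂ)*Complex.I) * ((a - Complex.I*b)/2)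
        + ((x:ℂ) - (y:ℂ)*Complex.I) * ((a + Complex.I*b)/2) := by
    intro x y a b
    linear_combination (y:ℂ) * b * Complex.I_sq
  have hdecomp : L w = ∑ k : Fin n,
      ((w k) * wderiv f z k + (starRingEnd ℂ) (w k) * wderivBar f z k) := by
    conv_lhs => rw [euclid_decomp w]
    rw [map_sum]
    refine Finset.sum_congr rfl fun k _ => ?_
    rw [single_split, map_add, L.map_smul, L.map_smul]
    rw [wderiv, wderivBar, ← hL, conj_eq_re_sub_im']
    have hsm : ((w k).re • L (EuclideanSpace.single k (1:ℂ))
        + (w k).im • L (EuclideanSpace.single k Complex.I))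
        = (((w k).re : ℂ) * L (EuclideanSpace.single k (1:ℂ))
          + ((w k).im : ℂ) * L (EuclideanSpace.single k Complex.I)) := by
      simp [Complex.real_smul]
    rw [hsm, key, Complex.re_add_im]
  have hB2 : ∀ k : Fin n, (0:ℝ) ≤ ‖wderiv f z k‖ + ‖wderivBar f z k‖ :=
    fun k => add_nonneg (norm_nonneg _) (norm_nonneg _)
  set S := ∑ k : Fin n, ‖w k‖ *
      (‖wderiv f z k‖ + ‖wderivBar f z k‖) with hS
  have hSnn : 0 ≤ S := Finset.sum_nonneg fun k _ => mul_nonneg (norm_nonneg _) (hB2 k)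
  set A := ∑ k : Fin n, ‖w k‖ ^ 2 with hA
  set B := ∑ k : Fin n,
      (‖wderiv f z k‖ + ‖wderivBar f z k‖) ^ 2 with hBdef
  have hAnn : (0:ℝ) ≤ A := Finset.sum_nonneg fun k _ => sq_nonneg _
  have step1 : ‖L w‖ ≤ S := by
    rw [hdecomp]
    refine (norm_sum_le _ _).trans (Finset.sum_le_sum fun k _ => ?_)
    refine (norm_add_le _ _).trans ?_
    rw [norm_mul, norm_mul, Complex.norm_conj, mul_add]
  have step2 : S ≤ Real.sqrt A * Real.sqrt B := by
    have h2 : S^2 ≤ A * B := Finset.sum_mul_sq_le_sq_mul_sq Finset.univ _ _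
    calc S = Real.sqrt (S^2) := (Real.sqrt_sq hSnn).symm
      _ ≤ Real.sqrt (A*B) := Real.sqrt_le_sqrt h2
      _ = Real.sqrt A * Real.sqrt B := Real.sqrt_mul hAnn B
  have hAval : Real.sqrt A = 1 := by
    have h := EuclideanSpace.norm_eq w
    rw [hw] at h
    exact h.symm
  have hBle : Real.sqrt B ≤ Real.sqrt 2 * gradNorm f z := by
    have hble : B ≤ 2 * ∑ k : Fin n,
        (‖wderiv f z k‖ ^ 2 + ‖wderivBar f z k‖ ^ 2) := by
      rw [Finset.mul_sum]
      exact Finset.sum_le_sum fun k _ => by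
        nlinarith [sq_nonneg (‖wderiv f z k‖ - ‖wderivBar f z k‖)]
    calc Real.sqrt B ≤ Real.sqrt (2 * ∑ k : Fin n,
          (‖wderiv f z k‖ ^ 2 + ‖wderivBar f z k‖ ^ 2)) :=
        Real.sqrt_le_sqrt hble
      _ = Real.sqrt 2 * gradNorm f z := by
        rw [Real.sqrt_mul (by norm_num)]; rfl
  calc ‖L w‖ ≤ S := step1
    _ ≤ Real.sqrt A * Real.sqrt B := step2
    _ ≤ Real.sqrt 2 * gradNorm f z := by
      rw [hAval, one_mul]; exact hBle
lemma myHasDerivAt_abs_rpow {n : ℕ} {f : Cn n → ℂ} {p : ℝ} (hp : 2 ≤ p)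
    (ζ : Cn n) {t : ℝ} (hd : DifferentiableAt ℝ f (t • ζ)) :
    HasDerivAt (fun s : ℝ => ‖f (s • ζ)‖ ^ p)
      (p * Complex.normSq (f (t • ζ)) ^ (p/2 - 1) *
        ((f (t • ζ)).re * (fderiv ℝ f (t • ζ) ζ).re
          + (f (t • ζ)).im * (fderiv ℝ f (t • ζ) ζ).im)) t := by
  set v := fderiv ℝ f (t • ζ) with hv
  have hsm : HasDerivAt (fun s : ℝ => s • ζ) ζ t := by
    simpa using (hasDerivAt_id t).smul_const ζ
  have hcv : HasDerivAt (fun s : ℝ => f (s • ζ)) (v ζ) t :=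
    hd.hasFDerivAt.comp_hasDerivAt t hsm
  have hre : HasDerivAt (fun s : ℝ => (f (s • ζ)).re) ((v ζ).re) t :=
    Complex.reCLM.hasFDerivAt.comp_hasDerivAt t hcv
  have him : HasDerivAt (fun s : ℝ => (f (s • ζ)).im) ((v ζ).im) t :=
    Complex.imCLM.hasFDerivAt.comp_hasDerivAt t hcv
  have hφ : HasDerivAt (fun s : ℝ => Complex.normSq (f (s • ζ)))
      ((v ζ).re * (f (t • ζ)).re + (f (t • ζ)).re * (v ζ).re
        + ((v ζ).im * (f (t • ζ)).im + (f (t • ζ)).im * (v ζ).im)) t := by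
    have h := (hre.mul hre).add (him.mul him)
    exact h.congr_of_eventuallyEq (Filter.Eventually.of_forall fun s => by
      simp only [Complex.normSq_apply, Pi.add_apply, Pi.mul_apply])
  have h1p : (1:ℝ) ≤ p/2 := by linarith
  have hcomp := (Real.hasDerivAt_rpow_const (x := Complex.normSq (f (t • ζ)))
    (p := p/2) (Or.inr h1p)).comp t hφ
  have hfun : (fun s : ℝ => ‖f (s • ζ)‖ ^ p)
      = fun s : ℝ => (Complex.normSq (f (s • ζ))) ^ (p/2 : ℝ) := by
    funext s
    rw [← Complex.sq_norm, ← Real.rpow_natCast (‖f (s • ζ)‖) 2,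
      ← Real.rpow_mul (norm_nonneg _)]
    norm_num
    ring_nf
  rw [hfun]
  exact hcomp.congr_deriv (by ring)
instance sigmaN_finite (n : ℕ) : IsFiniteMeasure (sigmaN n) := by
  constructor
  rw [sigmaN]
  calc ((volume (α := Cn n)).toSphere Set.univ)⁻¹ • (volume (α := Cn n)).toSphere Set.univ
        ≤ 1 := by
        rw [smul_eq_mul]; exact ENNReal.inv_mul_le_one _
    _ < ⊤ := ENNReal.one_lt_top

lemma integrable_of_cont {n : ℕ} (g : sphere (0 : Cn n) 1 → ℝ) (hg : Continuous g) :
    Integrable g (sigmaN n) := by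
  haveI : CompactSpace (sphere (0 : Cn n) 1) :=
    isCompact_iff_compactSpace.mp (isCompact_sphere _ _)
  obtain ⟨C, hC⟩ := isCompact_univ.exists_bound_of_continuousOn hg.continuousOn
  refine (integrable_const C).mono' hg.aestronglyMeasurable ?_
  exact Filter.Eventually.of_forall fun x => hC x (Set.mem_univ x)
set_option maxHeartbeats 1000000 in
/-- `M_p^p(r,f)` is differentiable in `r` with
`(d/dr) M_p^p(r,f) ≤ p√2 ∫_{∂𝔹ⁿ} |f(rζ)|^{p−1} |∇̃f(rζ)| dσ(ζ)`. -/
theorem stmt17 (n : ℕ) (lam : ℝ) (hlam : 0 ≤ lam) (p : ℝ) (hp : 2 ≤ p)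
    (f : Cn n → ℂ) (hf : IsYukawa lam f) :
    ∀ r ∈ Set.Ioo (0:ℝ) 1, ∃ d : ℝ,
      HasDerivAt (fun s => Mpp p s (fun z => ‖f z‖)) d r ∧
      d ≤ p * Real.sqrt 2 *
        ∫ ζ : sphere (0 : Cn n) 1,
          ‖f (r • (ζ : Cn n))‖ ^ (p - 1) * gradNorm f (r • (ζ : Cn n))
          ∂(sigmaN n) := by
  obtain ⟨hC2, -⟩ := hf
  have hC1 : ContDiffOn ℝ 1 f (ball (0:Cn n) 1) := hC2.of_le (by norm_num)
  have hfc : ContinuousOn f (ball (0:Cn n) 1) := hC1.continuousOn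
  have hfd : ContinuousOn (fderiv ℝ f) (ball (0:Cn n) 1) :=
    hC2.continuousOn_fderiv_of_isOpen isOpen_ball (by norm_num)
  have hdiff : ∀ z ∈ ball (0:Cn n) 1, DifferentiableAt ℝ f z := fun z hz =>
    (hC1.differentiableOn one_ne_zero).differentiableAt (isOpen_ball.mem_nhds hz)
  intro r hr
  obtain ⟨hr0, hr1⟩ := hr
  set b : ℝ := (r+1)/2 with hbdef
  have hb1 : b < 1 := by rw [hbdef]; linarith
  have hrb : r < b := by rw [hbdef]; linarith
  have hb0 : 0 < b := by rw [hbdef]; linarith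
  set ε : ℝ := b - r with hεdef
  have hε : 0 < ε := by rw [hεdef]; linarith
  have hnorm_smul : ∀ (s : ℝ) (ζ : sphere (0:Cn n) 1), ‖s • (ζ : Cn n)‖ = |s| := by
    intro s ζ
    rw [norm_smul, mem_sphere_zero_iff_norm.mp ζ.2, Real.norm_eq_abs, mul_one]
  have hmemB : ∀ s ∈ ball r ε, ∀ ζ : sphere (0:Cn n) 1,
      s • (ζ:Cn n) ∈ closedBall (0:Cn n) b := by
    intro s hs ζ
    rw [mem_closedBall_zero_iff, hnorm_smul]
    rw [mem_ball, Real.dist_eq] at hs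
    obtain ⟨h1, h2⟩ := abs_lt.mp hs
    rw [abs_le]
    constructor <;> [linarith; linarith]
  have hKsub : closedBall (0:Cn n) b ⊆ ball (0:Cn n) 1 := closedBall_subset_ball hb1
  have hmem1 : ∀ s ∈ ball r ε, ∀ ζ : sphere (0:Cn n) 1, s • (ζ:Cn n) ∈ ball (0:Cn n) 1 :=
    fun s hs ζ => hKsub (hmemB s hs ζ)
  have hrε : r ∈ ball r ε := mem_ball_self hε
  obtain ⟨C1, hC1b⟩ := (isCompact_closedBall (0:Cn n) b).exists_bound_of_continuousOn
    (hfc.mono hKsub)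
  obtain ⟨C2, hC2b⟩ := (isCompact_closedBall (0:Cn n) b).exists_bound_of_continuousOn
    (hfd.mono hKsub)
  have hC1nn : 0 ≤ C1 := le_trans (norm_nonneg _) (hC1b 0 (mem_closedBall_self hb0.le))
  have hC2nn : 0 ≤ C2 := le_trans (norm_nonneg _) (hC2b 0 (mem_closedBall_self hb0.le))
  set F' : ℝ → sphere (0:Cn n) 1 → ℝ := fun s ζ =>
    p * Complex.normSq (f (s • (ζ:Cn n))) ^ (p/2 - 1) *
      ((f (s • (ζ:Cn n))).re * (fderiv ℝ f (s • (ζ:Cn n)) (ζ:Cn n)).re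
        + (f (s • (ζ:Cn n))).im * (fderiv ℝ f (s • (ζ:Cn n)) (ζ:Cn n)).im) with hF'def
  have hmap : ∀ s : ℝ, Continuous (fun ζ : sphere (0:Cn n) 1 => s • (ζ:Cn n)) :=
    fun s => continuous_subtype_val.const_smul s
  have hcf : ∀ s ∈ ball r ε, Continuous (fun ζ : sphere (0:Cn n) 1 => f (s • (ζ:Cn n))) :=
    fun s hs => hfc.comp_continuous (hmap s) (fun ζ => hmem1 s hs ζ)
  have hcd : ∀ s ∈ ball r ε,
      Continuous (fun ζ : sphere (0:Cn n) 1 => fderiv ℝ f (s • (ζ:Cn n))) :=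
    fun s hs => hfd.comp_continuous (hmap s) (fun ζ => hmem1 s hs ζ)
  -- measurability of F
  have hF_meas : ∀ᶠ x in nhds r, AEStronglyMeasurable
      (fun ζ : sphere (0:Cn n) 1 => ‖f (x • (ζ:Cn n))‖ ^ p) (sigmaN n) := by
    filter_upwards [isOpen_ball.mem_nhds hrε] with s hs
    exact ((continuous_norm.comp (hcf s hs)).rpow_const
      (fun x => Or.inr (by linarith))).aestronglyMeasurable
  have hF_int : Integrable
      (fun ζ : sphere (0:Cn n) 1 => ‖f (r • (ζ:Cn n))‖ ^ p) (sigmaN n) :=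
    integrable_of_cont _ ((continuous_norm.comp (hcf r hrε)).rpow_const
      (fun x => Or.inr (by linarith)))
  -- continuity of F' r
  have happ : Continuous (fun ζ : sphere (0:Cn n) 1 => fderiv ℝ f (r • (ζ:Cn n)) (ζ:Cn n)) :=
    (hcd r hrε).clm_apply continuous_subtype_val
  have hF'cont : Continuous (F' r) := by
    rw [hF'def]
    refine (continuous_const.mul ((Complex.continuous_normSq.comp (hcf r hrε)).rpow_const
      (fun x => Or.inr (by linarith)))).mul ?_
    exact ((Complex.continuous_re.comp (hcf r hrε)).mul
        (Complex.continuous_re.comp happ)).add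
      ((Complex.continuous_im.comp (hcf r hrε)).mul (Complex.continuous_im.comp happ))
  have hF'_meas : AEStronglyMeasurable (F' r) (sigmaN n) := hF'cont.aestronglyMeasurable
  -- the uniform bound
  have h_bound : ∀ᵐ (ζ : sphere (0:Cn n) 1) ∂(sigmaN n), ∀ s ∈ ball r ε,
      ‖F' s ζ‖ ≤ p * (C1^2) ^ (p/2 - 1) * (C1 * C2) := by
    refine Filter.Eventually.of_forall fun ζ => fun s hs => ?_
    have hz : s • (ζ:Cn n) ∈ closedBall (0:Cn n) b := hmemB s hs ζ
    have hfz : ‖f (s • (ζ:Cn n))‖ ≤ C1 := hC1b _ hz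
    have hdz : ‖fderiv ℝ f (s • (ζ:Cn n))‖ ≤ C2 := hC2b _ hz
    have hvz : ‖fderiv ℝ f (s • (ζ:Cn n)) (ζ:Cn n)‖ ≤ C2 := by
      calc ‖fderiv ℝ f (s • (ζ:Cn n)) (ζ:Cn n)‖
          ≤ ‖fderiv ℝ f (s • (ζ:Cn n))‖ * ‖(ζ:Cn n)‖ := ContinuousLinearMap.le_opNorm _ _
        _ = ‖fderiv ℝ f (s • (ζ:Cn n))‖ := by
            rw [mem_sphere_zero_iff_norm.mp ζ.2, mul_one]
        _ ≤ C2 := hdz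
    set w := f (s • (ζ:Cn n)) with hw
    set v := fderiv ℝ f (s • (ζ:Cn n)) (ζ:Cn n) with hvdef
    have hinner_eq : w.re * v.re + w.im * v.im = ((starRingEnd ℂ) w * v).re := by
      simp [Complex.mul_re]
    have hinner : |w.re * v.re + w.im * v.im| ≤ C1 * C2 := by
      rw [hinner_eq]
      calc |((starRingEnd ℂ) w * v).re| ≤ ‖(starRingEnd ℂ) w * v‖ :=
          Complex.abs_re_le_norm _
        _ = ‖w‖ * ‖v‖ := by rw [norm_mul, Complex.norm_conj]
        _ ≤ C1 * C2 := by
            refine mul_le_mul ?_ hvz (norm_nonneg _) hC1nn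
            exact hfz
    have hX : Complex.normSq w ^ (p/2 - 1) ≤ (C1^2) ^ (p/2 - 1) := by
      refine Real.rpow_le_rpow (Complex.normSq_nonneg _) ?_ (by linarith)
      rw [Complex.normSq_eq_norm_sq]
      exact pow_le_pow_left₀ (norm_nonneg _) hfz 2
    have hXnn : 0 ≤ Complex.normSq w ^ (p/2 - 1) := Real.rpow_nonneg (Complex.normSq_nonneg _) _
    have hpnn : (0:ℝ) ≤ p := by linarith
    calc ‖F' s ζ‖ = p * Complex.normSq w ^ (p/2 - 1) * |w.re * v.re + w.im * v.im| := by
          rw [hF'def, Real.norm_eq_abs, abs_mul, abs_mul, _root_.abs_of_nonneg hpnn,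
            _root_.abs_of_nonneg hXnn]
      _ ≤ p * (C1^2) ^ (p/2 - 1) * (C1 * C2) := by
          refine mul_le_mul (mul_le_mul le_rfl hX hXnn hpnn) hinner (abs_nonneg _) ?_
          positivity
  have h_diff : ∀ᵐ (ζ : sphere (0:Cn n) 1) ∂(sigmaN n), ∀ s ∈ ball r ε,
      HasDerivAt (fun x => ‖f (x • (ζ:Cn n))‖ ^ p) (F' s ζ) s :=
    Filter.Eventually.of_forall fun ζ => fun s hs =>
      myHasDerivAt_abs_rpow hp (ζ:Cn n) (hdiff _ (hmem1 s hs ζ))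
  obtain ⟨hint, hder⟩ := hasDerivAt_integral_of_dominated_loc_of_deriv_le (ball_mem_nhds r hε) hF_meas hF_int
    hF'_meas h_bound (integrable_const _) h_diff
  refine ⟨∫ ζ : sphere (0:Cn n) 1, F' r ζ ∂(sigmaN n), ?_, ?_⟩
  · simpa only [Mpp] using hder
  -- the inequality
  have hgrad : Continuous (fun ζ : sphere (0:Cn n) 1 => gradNorm f (r • (ζ:Cn n))) := by
    have hA : ∀ c : Cn n,
        Continuous (fun ζ : sphere (0:Cn n) 1 => fderiv ℝ f (r • (ζ:Cn n)) c) :=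
      fun c => (ContinuousLinearMap.apply ℝ ℂ c).continuous.comp (hcd r hrε)
    simp only [gradNorm, wderiv, wderivBar]
    refine Real.continuous_sqrt.comp ?_
    refine continuous_finset_sum _ fun k _ => ?_
    exact ((continuous_norm.comp (((hA _).sub
        (continuous_const.mul (hA _))).div_const 2)).pow 2).add
      ((continuous_norm.comp (((hA _).add
        (continuous_const.mul (hA _))).div_const 2)).pow 2)
  have hRHScont : Continuous (fun ζ : sphere (0:Cn n) 1 =>
      p * Real.sqrt 2 * (‖f (r • (ζ:Cn n))‖ ^ (p - 1) * gradNorm f (r • (ζ:Cn n)))) := by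
    refine continuous_const.mul (Continuous.mul ?_ hgrad)
    exact (continuous_norm.comp (hcf r hrε)).rpow_const (fun x => Or.inr (by linarith))
  have hRHSint := integrable_of_cont _ hRHScont
  have hpt : ∀ ζ : sphere (0:Cn n) 1, F' r ζ ≤
      p * Real.sqrt 2 * (‖f (r • (ζ:Cn n))‖ ^ (p - 1) * gradNorm f (r • (ζ:Cn n))) := by
    intro ζ
    have hζ1 : ‖(ζ:Cn n)‖ = 1 := mem_sphere_zero_iff_norm.mp ζ.2
    have hv := abs_fderiv_le f (r • (ζ:Cn n)) (ζ:Cn n) hζ1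
    set w := f (r • (ζ:Cn n)) with hw
    set v := fderiv ℝ f (r • (ζ:Cn n)) (ζ:Cn n) with hvdef
    have hXeq : Complex.normSq w ^ (p/2 - 1) = ‖w‖ ^ (p - 2) := by
      rw [← Complex.sq_norm, ← Real.rpow_natCast (‖w‖) 2,
        ← Real.rpow_mul (norm_nonneg _)]
      ring_nf
    have hinner_le : w.re * v.re + w.im * v.im ≤ ‖w‖ * ‖v‖ := by
      have hinner_eq : w.re * v.re + w.im * v.im = ((starRingEnd ℂ) w * v).re := by
        simp [Complex.mul_re]
      rw [hinner_eq]
      calc ((starRingEnd ℂ) w * v).re ≤ |((starRingEnd ℂ) w * v).re| := le_abs_self _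
        _ ≤ ‖(starRingEnd ℂ) w * v‖ := Complex.abs_re_le_norm _
        _ = ‖w‖ * ‖v‖ := by rw [norm_mul, Complex.norm_conj]
    have hstep : ‖w‖ ^ (p-2) * ‖w‖ ≤ ‖w‖ ^ (p-1) := by
      rcases eq_or_ne (‖w‖) 0 with h0 | h0
      · rw [h0, mul_zero]
        exact Real.rpow_nonneg le_rfl _
      · rw [show p - 1 = (p-2) + 1 by ring, Real.rpow_add_one h0]
    have hpnn : (0:ℝ) ≤ p := by linarith
    calc F' r ζ = p * (‖w‖ ^ (p-2)) * (w.re * v.re + w.im * v.im) := by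
          simp only [hF'def]
          rw [← hw, ← hvdef, hXeq]
      _ ≤ p * (‖w‖ ^ (p-2)) * (‖w‖ * ‖v‖) :=
          mul_le_mul_of_nonneg_left hinner_le
            (mul_nonneg hpnn (Real.rpow_nonneg (norm_nonneg _) _))
      _ = p * (‖w‖ ^ (p-2) * ‖w‖) * ‖v‖ := by ring
      _ ≤ p * (‖w‖ ^ (p-1)) * (Real.sqrt 2 * gradNorm f (r • (ζ:Cn n))) := by
          refine mul_le_mul (mul_le_mul le_rfl hstep ?_ hpnn) hv (norm_nonneg _) ?_
          · positivity
          · positivity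
      _ = p * Real.sqrt 2 * (‖w‖ ^ (p - 1) * gradNorm f (r • (ζ:Cn n))) := by ring
  calc (∫ ζ : sphere (0:Cn n) 1, F' r ζ ∂(sigmaN n))
      ≤ ∫ ζ : sphere (0:Cn n) 1, p * Real.sqrt 2 *
          (‖f (r • (ζ:Cn n))‖ ^ (p - 1) * gradNorm f (r • (ζ:Cn n)))
          ∂(sigmaN n) := integral_mono hint hRHSint hpt
    _ = p * Real.sqrt 2 * ∫ ζ : sphere (0:Cn n) 1,
          ‖f (r • (ζ:Cn n))‖ ^ (p - 1) * gradNorm f (r • (ζ:Cn n))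
          ∂(sigmaN n) := integral_const_mul _ _
end
end
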